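/- arXiv:2409.05063 — 6 statements merged into one kernel-verified Lean document; each statement's English description precedes it below -/
import Mathlib

section
/- Let G be a finite undirected weighted graph on n vertices with symmetric nonnegative weight matrix W, degree matrix D (assumed invertible), and stubbornness matrix Θ = diag(θ_1,...,θ_n) with θ_i ∈ [0,1]. If for each vertex i either θ_i > 0 or i is connected to some vertex j with θ_j > 0, then the matrix I - (I-Θ)D^{-1}W is invertible and P = (I - (I-Θ)D^{-1}W)^{-1}Θ is a row-stochastic matrix (nonnegative with row sums equal to 1). -/
open Matrix

attribute [local instance] Matrix.linftyOpNormedRing Matrix.linftyOpNormedAlgebra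

/-- For the FJ model over a finite undirected weighted graph with symmetric
nonnegative weight matrix `W`, invertible degree matrix `D = diagonal d`, and stubbornness
matrix `Θ = diagonal θ` with `θ i ∈ [0,1]`, if every vertex either has positive stubbornness
or is connected (by a path of positive-weight edges) to a vertex with positive stubbornness,
then `I - (I-Θ)D⁻¹W` is invertible and `P = (I - (I-Θ)D⁻¹W)⁻¹Θ` is row stochastic. -/
theorem stmt_0 (n : ℕ) (W : Matrix (Fin n) (Fin n) ℝ)
    (hWsymm : W.IsSymm) (hWnonneg : ∀ i j, 0 ≤ W i j)
    (θ : Fin n → ℝ) (hθ : ∀ i, θ i ∈ Set.Icc (0:ℝ) 1)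
    (d : Fin n → ℝ) (hd : ∀ i, d i = ∑ j, W i j)
    (hdinv : IsUnit (Matrix.diagonal d))
    (hstub : ∀ i, 0 < θ i ∨
      ∃ j, Relation.ReflTransGen (fun a b => 0 < W a b) i j ∧ 0 < θ j) :
    IsUnit (1 - Matrix.diagonal (fun i => 1 - θ i) * (Matrix.diagonal d)⁻¹ * W) ∧
    (∀ i j, 0 ≤ ((1 - Matrix.diagonal (fun i => 1 - θ i) * (Matrix.diagonal d)⁻¹ * W)⁻¹ *
        Matrix.diagonal θ) i j) ∧
    (∀ i, ∑ j, ((1 - Matrix.diagonal (fun i => 1 - θ i) * (Matrix.diagonal d)⁻¹ * W)⁻¹ *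
        Matrix.diagonal θ) i j = 1) := by
  classical
  -- d is positive
  have hdne : ∀ i, d i ≠ 0 := by
    intro i
    have h1 : IsUnit (Matrix.diagonal d).det := (Matrix.isUnit_iff_isUnit_det _).mp hdinv
    rw [Matrix.det_diagonal] at h1
    have := h1.ne_zero
    rw [Finset.prod_ne_zero_iff] at this
    exact this i (Finset.mem_univ i)
  have hdpos : ∀ i, 0 < d i := by
    intro i
    have : 0 ≤ d i := by
      rw [hd i]; exact Finset.sum_nonneg fun j _ => hWnonneg i j
    exact lt_of_le_of_ne this (Ne.symm (hdne i))
  have hDinv : (Matrix.diagonal d)⁻¹ = Matrix.diagonal (fun i => (d i)⁻¹) := by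
    apply Matrix.inv_eq_right_inv
    rw [Matrix.diagonal_mul_diagonal]
    convert Matrix.diagonal_one using 2
    exact funext fun i => mul_inv_cancel₀ (hdne i)
  set M : Matrix (Fin n) (Fin n) ℝ :=
    Matrix.diagonal (fun i => 1 - θ i) * (Matrix.diagonal d)⁻¹ * W with hMdef
  have hMentry : ∀ i j, M i j = (1 - θ i) * ((d i)⁻¹ * W i j) := by
    intro i j
    rw [hMdef, hDinv, Matrix.diagonal_mul_diagonal, Matrix.diagonal_mul, mul_assoc]
  have hθ0 : ∀ i, 0 ≤ θ i := fun i => (hθ i).1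
  have hθ1 : ∀ i, θ i ≤ 1 := fun i => (hθ i).2
  have hMnonneg : ∀ i j, 0 ≤ M i j := by
    intro i j
    rw [hMentry]
    exact mul_nonneg (by linarith [hθ1 i]) (mul_nonneg (inv_nonneg.mpr (hdpos i).le) (hWnonneg i j))
  have hMrow : ∀ i, ∑ j, M i j = 1 - θ i := by
    intro i
    simp_rw [hMentry, ← Finset.mul_sum, ← hd i]
    rw [inv_mul_cancel₀ (hdne i), mul_one]
  -- row sums of powers
  set r : ℕ → Fin n → ℝ := fun k i => ∑ j, (M ^ k) i j with hrdef
  have hr0 : ∀ i, r 0 i = 1 := by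
    intro i; simp [hrdef, Matrix.one_apply]
  have hrsucc : ∀ k i, r (k + 1) i = ∑ j, M i j * r k j := by
    intro k i
    simp only [hrdef, pow_succ', Matrix.mul_apply, Finset.mul_sum]
    rw [Finset.sum_comm]
  have hpownonneg : ∀ k i j, 0 ≤ (M ^ k) i j := by
    intro k
    induction k with
    | zero =>
      intro i j
      rw [pow_zero, Matrix.one_apply]
      split_ifs <;> norm_num
    | succ k ih =>
      intro i j
      rw [pow_succ, Matrix.mul_apply]
      exact Finset.sum_nonneg fun l _ => mul_nonneg (ih i l) (hMnonneg l j)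
  have hrnonneg : ∀ k i, 0 ≤ r k i := fun k i =>
    Finset.sum_nonneg fun j _ => hpownonneg k i j
  have hrle1 : ∀ k i, r k i ≤ 1 := by
    intro k
    induction k with
    | zero => intro i; rw [hr0]
    | succ k ih =>
      intro i
      rw [hrsucc]
      calc ∑ j, M i j * r k j ≤ ∑ j, M i j * 1 :=
            Finset.sum_le_sum fun j _ => mul_le_mul_of_nonneg_left (ih j) (hMnonneg i j)
        _ = 1 - θ i := by simp_rw [mul_one]; exact hMrow i
        _ ≤ 1 := by linarith [hθ0 i]
  have hranti : ∀ k i, r (k + 1) i ≤ r k i := by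
    intro k
    induction k with
    | zero =>
      intro i
      rw [hr0, hrsucc]
      calc ∑ j, M i j * r 0 j ≤ ∑ j, M i j * 1 :=
            Finset.sum_le_sum fun j _ => mul_le_mul_of_nonneg_left (hrle1 0 j) (hMnonneg i j)
        _ ≤ 1 := by simp_rw [mul_one]; rw [hMrow i]; linarith [hθ0 i]
    | succ k ih =>
      intro i
      rw [hrsucc, hrsucc]
      exact Finset.sum_le_sum fun j _ => mul_le_mul_of_nonneg_left (ih j) (hMnonneg i j)
  have hrmono : ∀ i, ∀ k k', k ≤ k' → r k' i ≤ r k i := by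
    intro i k k' h
    exact antitone_nat_of_succ_le (f := fun k => r k i) (fun m => hranti m i) h
  -- strict contraction from stubbornness
  have hstep1 : ∀ i, 0 < θ i → r 1 i < 1 := by
    intro i hi
    rw [hrsucc]
    calc ∑ j, M i j * r 0 j ≤ 1 - θ i := by
          simp_rw [hr0, mul_one]; rw [hMrow i]
      _ < 1 := by linarith
  have hstep : ∀ i b k, 0 < W i b → r k b < 1 → r (k + 1) i < 1 := by
    intro i b k hWib hrb
    rcases eq_or_lt_of_le (hθ0 i) with hθi | hθi
    · -- θ i = 0
      rw [hrsucc]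
      have hMib : 0 < M i b := by
        rw [hMentry, ← hθi]
        simpa using mul_pos (inv_pos.mpr (hdpos i)) hWib
      have : ∑ j, M i j * r k j < ∑ j, M i j * 1 := by
        apply Finset.sum_lt_sum
        · intro j _; exact mul_le_mul_of_nonneg_left (hrle1 k j) (hMnonneg i j)
        · exact ⟨b, Finset.mem_univ b, by
            exact mul_lt_mul_of_pos_left hrb hMib⟩
      calc ∑ j, M i j * r k j < ∑ j, M i j * 1 := this
        _ = 1 := by simp_rw [mul_one]; rw [hMrow i, ← hθi]; ring
    · -- θ i > 0
      calc r (k + 1) i ≤ r 1 i := hrmono i 1 (k + 1) (by omega)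
        _ < 1 := hstep1 i hθi
  have hreach : ∀ i, ∃ k, r k i < 1 := by
    intro i
    rcases hstub i with hi | ⟨j, hpath, hj⟩
    · exact ⟨1, hstep1 i hi⟩
    · clear hstub
      induction hpath using Relation.ReflTransGen.head_induction_on with
      | refl => exact ⟨1, hstep1 j hj⟩
      | head hab _ ih =>
        obtain ⟨k, hk⟩ := ih
        exact ⟨k + 1, hstep _ _ k hab hk⟩
  -- a uniform K
  obtain ⟨K, hK⟩ : ∃ K, ∀ i, r K i < 1 := by
    refine ⟨Finset.univ.sup (fun i => (hreach i).choose), fun i => ?_⟩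
    exact lt_of_le_of_lt
      (hrmono i _ _ (Finset.le_sup (Finset.mem_univ i)))
      (hreach i).choose_spec
  -- norm bound
  have hBnorm : ‖M ^ K‖ < 1 := by
    rw [Matrix.linfty_opNorm_def]
    have : ((Finset.univ : Finset (Fin n)).sup fun i => ∑ j, ‖(M ^ K) i j‖₊ : NNReal) < 1 := by
      rw [Finset.sup_lt_iff (by norm_num : (⊥ : NNReal) < 1)]
      intro i _
      have h1 : ((∑ j, ‖(M ^ K) i j‖₊ : NNReal) : ℝ) = r K i := by
        push_cast
        exact Finset.sum_congr rfl fun j _ => by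
          rw [Real.norm_eq_abs, abs_of_nonneg (hpownonneg K i j)]
      rw [← NNReal.coe_lt_coe, h1, NNReal.coe_one]
      exact hK i
    exact_mod_cast this
  have hBunit : IsUnit (1 - M ^ K) := isUnit_one_sub_of_norm_lt_one hBnorm
  set S : Matrix (Fin n) (Fin n) ℝ := ∑ i ∈ Finset.range K, M ^ i with hSdef
  have hgeom : S * (1 - M) = 1 - M ^ K := geom_sum_mul_neg M K
  have hgeom' : (1 - M) * S = 1 - M ^ K := mul_neg_geom_sum M K
  have hAunit : IsUnit (1 - M) := by
    rw [Matrix.isUnit_iff_isUnit_det]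
    have h1 : IsUnit ((1 - M) * S).det := by
      rw [hgeom']; exact (Matrix.isUnit_iff_isUnit_det _).mp hBunit
    rw [Matrix.det_mul] at h1
    exact isUnit_of_mul_isUnit_left h1
  have hAdet : IsUnit (1 - M).det := (Matrix.isUnit_iff_isUnit_det _).mp hAunit
  have hBdet : IsUnit (1 - M ^ K).det := (Matrix.isUnit_iff_isUnit_det _).mp hBunit
  have hAinv : (1 - M)⁻¹ = (1 - M ^ K)⁻¹ * S := by
    apply Matrix.inv_eq_left_inv
    rw [Matrix.mul_assoc, hgeom, Matrix.nonsing_inv_mul _ hBdet]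
  -- nonnegativity of (1 - M^K)⁻¹
  have hBinvnonneg : ∀ i j, 0 ≤ (1 - M ^ K)⁻¹ i j := by
    intro i j
    have hsum : HasSum (fun t : ℕ => (M ^ K) ^ t) (Ring.inverse (1 - M ^ K)) :=
      hasSum_geom_series_inverse (M ^ K) hBnorm
    have hentry : HasSum (fun t : ℕ => ((M ^ K) ^ t) i j) ((Ring.inverse (1 - M ^ K)) i j) := by
      let φ : Matrix (Fin n) (Fin n) ℝ →ₗ[ℝ] ℝ :=
        { toFun := fun A => A i j
          map_add' := fun A B => rfl
          map_smul' := fun c A => rfl }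
      exact hsum.map φ.toContinuousLinearMap φ.toContinuousLinearMap.continuous
    have h0 : ∀ t : ℕ, 0 ≤ ((M ^ K) ^ t) i j := by
      intro t; rw [← pow_mul]; exact hpownonneg _ i j
    have := hentry.nonneg h0
    rwa [← Matrix.nonsing_inv_eq_ringInverse] at this
  have hAinvnonneg : ∀ i j, 0 ≤ (1 - M)⁻¹ i j := by
    intro i j
    rw [hAinv, Matrix.mul_apply]
    apply Finset.sum_nonneg
    intro l _
    apply mul_nonneg (hBinvnonneg i l)
    have hS : S l j = ∑ t ∈ Finset.range K, (M ^ t) l j := by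
      simp [hSdef, Matrix.sum_apply]
    rw [hS]
    exact Finset.sum_nonneg fun t _ => hpownonneg t l j
  refine ⟨hAunit, ?_, ?_⟩
  · intro i j
    rw [Matrix.mul_diagonal]
    exact mul_nonneg (hAinvnonneg i j) (hθ0 j)
  · intro i
    -- row sums equal 1
    have hA1 : (1 - M) *ᵥ (fun _ => (1:ℝ)) = θ := by
      funext i
      rw [Matrix.sub_mulVec, Matrix.one_mulVec]
      simp only [Pi.sub_apply]
      have h2 : (M *ᵥ fun _ => (1:ℝ)) i = ∑ j, M i j := by
        simp [Matrix.mulVec, dotProduct]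
      rw [h2, hMrow i]
      ring
    have key : (1 - M)⁻¹ *ᵥ θ = (fun _ => (1:ℝ)) := by
      rw [← hA1, Matrix.mulVec_mulVec, Matrix.nonsing_inv_mul _ hAdet, Matrix.one_mulVec]
    have : ∑ j, ((1 - M)⁻¹ * Matrix.diagonal θ) i j = ((1 - M)⁻¹ *ᵥ θ) i := by
      simp_rw [Matrix.mul_diagonal, Matrix.mulVec, dotProduct]
    rw [this, key]
end

section
/- Under the same hypotheses (each agent either has θ_i > 0 or is connected to an agent with positive stubbornness), the opinion vector x(t) of the FJ model converges as t → ∞, and its limit equals P x(0) where P = (I - (I-Θ)D^{-1}W)^{-1}Θ. -/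
open Matrix Filter Finset

/-- Under the same hypotheses, the FJ opinion vector
`x(t+1) = (I-Θ)D⁻¹W x(t) + Θ x(0)` converges as `t → ∞` to `P x(0)` with
`P = (I - (I-Θ)D⁻¹W)⁻¹ Θ`. -/
theorem stmt_1 (n : ℕ) (W : Matrix (Fin n) (Fin n) ℝ)
    (hWsymm : W.IsSymm) (hWnonneg : ∀ i j, 0 ≤ W i j)
    (θ : Fin n → ℝ) (hθ : ∀ i, θ i ∈ Set.Icc (0:ℝ) 1)
    (d : Fin n → ℝ) (hd : ∀ i, d i = ∑ j, W i j)
    (hdinv : IsUnit (Matrix.diagonal d))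
    (hstub : ∀ i, 0 < θ i ∨
      ∃ j, Relation.ReflTransGen (fun a b => 0 < W a b) i j ∧ 0 < θ j)
    (x : ℕ → Fin n → ℝ)
    (hrec : ∀ t, x (t + 1) =
      (Matrix.diagonal (fun i => 1 - θ i) * (Matrix.diagonal d)⁻¹ * W).mulVec (x t) +
        (Matrix.diagonal θ).mulVec (x 0)) :
    Filter.Tendsto x Filter.atTop
      (nhds (((1 - Matrix.diagonal (fun i => 1 - θ i) * (Matrix.diagonal d)⁻¹ * W)⁻¹ *
        Matrix.diagonal θ).mulVec (x 0))) := by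
  rcases isEmpty_or_nonempty (Fin n) with hn | hn
  · have hall : ∀ (u v : Fin n → ℝ), u = v := fun u v => funext fun i => hn.elim i
    refine tendsto_const_nhds.congr fun t => ?_
    exact hall _ _
  set A := Matrix.diagonal (fun i => 1 - θ i) * (Matrix.diagonal d)⁻¹ * W with hAdef
  -- d is positive
  have hdne : ∀ i, d i ≠ 0 := by
    intro i
    have h1 : IsUnit (Matrix.diagonal d).det := (Matrix.isUnit_iff_isUnit_det _).1 hdinv
    rw [Matrix.det_diagonal] at h1
    have h2 : (∏ j, d j) ≠ 0 := h1.ne_zero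
    exact fun h => h2 (Finset.prod_eq_zero (Finset.mem_univ i) h)
  have hdpos : ∀ i, 0 < d i := by
    intro i
    have h0 : 0 ≤ d i := by
      rw [hd i]; exact Finset.sum_nonneg fun j _ => hWnonneg i j
    rcases h0.lt_or_eq with h | h
    · exact h
    · exact absurd h.symm (hdne i)
  -- inverse of diagonal
  have hinvd : (Matrix.diagonal d)⁻¹ = Matrix.diagonal (fun i => (d i)⁻¹) := by
    apply Matrix.inv_eq_right_inv
    have hfd : (fun i => d i * (d i)⁻¹) = fun _ : Fin n => (1 : ℝ) :=
      funext fun i => mul_inv_cancel₀ (hdne i)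
    rw [Matrix.diagonal_mul_diagonal, hfd, Matrix.diagonal_one]
  have hAe : ∀ i j, A i j = (1 - θ i) * ((d i)⁻¹ * W i j) := by
    intro i j
    rw [hAdef, hinvd, Matrix.diagonal_mul_diagonal, Matrix.diagonal_mul]
    ring
  have hAnn : ∀ i j, 0 ≤ A i j := by
    intro i j
    rw [hAe]
    exact mul_nonneg (by linarith [(hθ i).2]) (mul_nonneg (inv_nonneg.2 (hdpos i).le) (hWnonneg i j))
  have hrow : ∀ i, ∑ j, A i j = 1 - θ i := by
    intro i
    simp only [hAe]
    rw [← Finset.mul_sum, ← Finset.mul_sum, ← hd i, inv_mul_cancel₀ (hdne i), mul_one]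
  -- powers are nonnegative
  have hPnn : ∀ t i j, 0 ≤ (A ^ t) i j := by
    intro t
    induction t with
    | zero => intro i j; rw [pow_zero, Matrix.one_apply]; split <;> norm_num
    | succ t ih =>
        intro i j
        rw [pow_succ, Matrix.mul_apply]
        exact Finset.sum_nonneg fun l _ => mul_nonneg (ih i l) (hAnn l j)
  -- row sums of powers
  set r : ℕ → Fin n → ℝ := fun t i => ∑ j, (A ^ t) i j with hrdef
  have hr0 : ∀ i, r 0 i = 1 := by
    intro i; simp [hrdef, Matrix.one_apply]
  have hrnn : ∀ t i, 0 ≤ r t i := fun t i => Finset.sum_nonneg fun j _ => hPnn t i j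
  have hradd : ∀ s t i, r (s + t) i = ∑ l, (A ^ s) i l * r t l := by
    intro s t i
    simp only [hrdef, pow_add, Matrix.mul_apply, Finset.mul_sum]
    rw [Finset.sum_comm]
  have hr1 : ∀ t i, r t i ≤ 1 := by
    intro t
    induction t with
    | zero => intro i; rw [hr0]
    | succ t ih =>
        intro i
        rw [show t + 1 = 1 + t by omega, hradd 1 t i]
        calc ∑ l, (A ^ 1) i l * r t l ≤ ∑ l, (A ^ 1) i l * 1 :=
              Finset.sum_le_sum fun l _ => mul_le_mul_of_nonneg_left (ih l) (by simpa using hAnn i l)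
          _ = 1 - θ i := by simp only [pow_one, mul_one]; exact hrow i
          _ ≤ 1 := by linarith [(hθ i).1]
  have hmono : ∀ s t i, r (s + t) i ≤ r s i := by
    intro s t i
    rw [hradd s t i]
    calc ∑ l, (A ^ s) i l * r t l ≤ ∑ l, (A ^ s) i l * 1 :=
          Finset.sum_le_sum fun l _ => mul_le_mul_of_nonneg_left (hr1 t l) (hPnn s i l)
      _ = r s i := by simp [hrdef]
  -- key: each row eventually has sum < 1
  have hkey : ∀ i, 0 < θ i → r 1 i < 1 := by
    intro i hi
    have : r 1 i = 1 - θ i := by simp only [hrdef, pow_one]; exact hrow i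
    rw [this]; linarith
  have hlt : ∀ i, ∃ s, 1 ≤ s ∧ r s i < 1 := by
    intro i
    rcases hstub i with h | ⟨j, hpath, hj⟩
    · exact ⟨1, le_refl 1, hkey i h⟩
    · refine Relation.ReflTransGen.head_induction_on hpath ⟨1, le_refl 1, hkey j hj⟩ ?_
      intro a c hac _ ih
      by_cases ha : 0 < θ a
      · exact ⟨1, le_refl 1, hkey a ha⟩
      · have hθa : θ a = 0 := le_antisymm (not_lt.1 ha) (hθ a).1
        obtain ⟨s, hs1, hs⟩ := ih
        refine ⟨s + 1, by omega, ?_⟩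
        rw [show s + 1 = 1 + s by omega, hradd 1 s a]
        have hAac : 0 < A a c := by
          rw [hAe a c, hθa, sub_zero, one_mul]
          exact mul_pos (inv_pos.2 (hdpos a)) hac
        calc ∑ l, (A ^ 1) a l * r s l < ∑ l, (A ^ 1) a l * 1 := by
              simp only [pow_one]
              exact Finset.sum_lt_sum
                (fun l _ => mul_le_mul_of_nonneg_left (hr1 s l) (hAnn a l))
                ⟨c, Finset.mem_univ c, by
                  simpa using mul_lt_mul_of_pos_left hs hAac⟩
          _ = 1 - θ a := by simp only [pow_one, mul_one]; exact hrow a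
          _ ≤ 1 := by linarith [(hθ a).1]
  choose s hs using hlt
  haveI : Nonempty (Fin n) := hn
  set k := Finset.univ.sup s with hkdef
  obtain ⟨i0⟩ := id hn
  have hk1 : 1 ≤ k := le_trans (hs i0).1 (Finset.le_sup (Finset.mem_univ i0))
  have hrk : ∀ i, r k i < 1 := by
    intro i
    have hsk : s i ≤ k := Finset.le_sup (Finset.mem_univ i)
    calc r k i = r (s i + (k - s i)) i := by rw [Nat.add_sub_cancel' hsk]
      _ ≤ r (s i) i := hmono _ _ _
      _ < 1 := (hs i).2
  have hne : (Finset.univ : Finset (Fin n)).Nonempty := Finset.univ_nonempty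
  set c := Finset.univ.sup' hne (fun i => r k i) with hcdef
  have hc1 : c < 1 := (Finset.sup'_lt_iff hne).2 fun i _ => hrk i
  have hrc : ∀ i, r k i ≤ c := fun i => Finset.le_sup' _ (Finset.mem_univ i)
  have hc0 : 0 ≤ c := le_trans (hrnn k i0) (hrc i0)
  have hpowb : ∀ q i, r (k * q) i ≤ c ^ q := by
    intro q
    induction q with
    | zero => intro i; simp [hr0]
    | succ q ih =>
        intro i
        rw [show k * (q + 1) = k + k * q by ring, hradd k (k * q) i]
        calc ∑ l, (A ^ k) i l * r (k * q) l ≤ ∑ l, (A ^ k) i l * c ^ q :=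
              Finset.sum_le_sum fun l _ => mul_le_mul_of_nonneg_left (ih l) (hPnn k i l)
          _ = r k i * c ^ q := by rw [← Finset.sum_mul]
          _ ≤ c * c ^ q := mul_le_mul_of_nonneg_right (hrc i) (pow_nonneg hc0 q)
          _ = c ^ (q + 1) := by ring
  have hbound : ∀ t i, r t i ≤ c ^ (t / k) := by
    intro t i
    calc r t i = r (k * (t / k) + t % k) i := by rw [Nat.div_add_mod]
      _ ≤ r (k * (t / k)) i := hmono _ _ _
      _ ≤ c ^ (t / k) := hpowb _ _
  have hentry : ∀ t i j, |(A ^ t) i j| ≤ c ^ (t / k) := by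
    intro t i j
    rw [abs_of_nonneg (hPnn t i j)]
    exact le_trans (Finset.single_le_sum (fun l _ => hPnn t i l) (Finset.mem_univ j)) (hbound t i)
  have hdiv : Filter.Tendsto (fun t : ℕ => t / k) Filter.atTop Filter.atTop :=
    Filter.tendsto_atTop_atTop.2 fun b => ⟨b * k, fun t ht =>
      (Nat.le_div_iff_mul_le (by omega)).2 ht⟩
  have htc : Filter.Tendsto (fun t : ℕ => c ^ (t / k)) Filter.atTop (nhds 0) :=
    (tendsto_pow_atTop_nhds_zero_of_lt_one hc0 hc1).comp hdiv
  have hAt0 : ∀ i j, Filter.Tendsto (fun t => (A ^ t) i j) Filter.atTop (nhds 0) := by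
    intro i j
    exact squeeze_zero_norm (fun t => by simpa [Real.norm_eq_abs] using hentry t i j) htc
  -- invertibility of 1 - A
  have hker : ∀ w : Fin n → ℝ, (1 - A ^ k).mulVec w = 0 → w = 0 := by
    intro w hw
    have hwA : ∀ i, w i = ∑ j, (A ^ k) i j * w j := by
      intro i
      have := congrFun hw i
      simp only [Matrix.sub_mulVec, Matrix.one_mulVec, Pi.sub_apply, Pi.zero_apply,
        sub_eq_zero] at this
      rw [this]
      simp [Matrix.mulVec, dotProduct]
    obtain ⟨im, -, him⟩ := Finset.exists_mem_eq_sup' hne (fun i => |w i|)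
    have hM0 : 0 ≤ |w im| := abs_nonneg _
    have hMle : ∀ i, |w i| ≤ |w im| := fun i =>
      him ▸ Finset.le_sup' (fun i => |w i|) (Finset.mem_univ i)
    have hMc : |w im| ≤ c * |w im| := by
      calc |w im| = |∑ j, (A ^ k) im j * w j| := by rw [← hwA im]
        _ ≤ ∑ j, |(A ^ k) im j * w j| := Finset.abs_sum_le_sum_abs _ _
        _ ≤ ∑ j, (A ^ k) im j * |w im| := by
            refine Finset.sum_le_sum fun j _ => ?_
            rw [abs_mul, abs_of_nonneg (hPnn k im j)]
            exact mul_le_mul_of_nonneg_left (hMle j) (hPnn k im j)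
        _ = r k im * |w im| := by rw [← Finset.sum_mul]
        _ ≤ c * |w im| := mul_le_mul_of_nonneg_right (hrc im) hM0
    have hMz : |w im| ≤ 0 := by nlinarith
    funext i
    have h3 : |w i| ≤ 0 := le_trans (hMle i) hMz
    exact abs_nonpos_iff.1 h3
  have hUk : IsUnit (1 - A ^ k) := by
    rw [← Matrix.mulVec_injective_iff_isUnit]
    intro u v huv
    have : (1 - A ^ k).mulVec (u - v) = 0 := by
      rw [Matrix.mulVec_sub, huv, sub_self]
    have := hker _ this
    exact sub_eq_zero.1 this
  have hgeo : (∑ i ∈ Finset.range k, A ^ i) * (1 - A) = 1 - A ^ k := by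
    have h := geom_sum_mul A k
    calc (∑ i ∈ Finset.range k, A ^ i) * (1 - A)
        = -((∑ i ∈ Finset.range k, A ^ i) * (A - 1)) := by rw [← mul_neg, neg_sub]
      _ = -(A ^ k - 1) := by rw [h]
      _ = 1 - A ^ k := neg_sub _ _
  have hU : IsUnit (1 - A) := by
    have h1 : IsUnit (1 - A ^ k).det := (Matrix.isUnit_iff_isUnit_det _).1 hUk
    rw [← hgeo, Matrix.det_mul] at h1
    exact (Matrix.isUnit_iff_isUnit_det _).2 (isUnit_of_mul_isUnit_right h1)
  have hUdet : IsUnit (1 - A).det := (Matrix.isUnit_iff_isUnit_det _).1 hU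
  set B := (1 - A)⁻¹ with hBdef
  have hBl : B * (1 - A) = 1 := Matrix.nonsing_inv_mul _ hUdet
  have hS : ∀ t, (∑ s ∈ Finset.range t, A ^ s) = B - B * A ^ t := by
    intro t
    have h1 : (1 - A) * (∑ s ∈ Finset.range t, A ^ s) = 1 - A ^ t := by
      have h := mul_geom_sum A t
      calc (1 - A) * (∑ s ∈ Finset.range t, A ^ s)
          = -((A - 1) * (∑ s ∈ Finset.range t, A ^ s)) := by rw [← neg_mul, neg_sub]
        _ = -(A ^ t - 1) := by rw [h]
        _ = 1 - A ^ t := neg_sub _ _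
    calc (∑ s ∈ Finset.range t, A ^ s)
        = B * ((1 - A) * (∑ s ∈ Finset.range t, A ^ s)) := by
          rw [← Matrix.mul_assoc, hBl, Matrix.one_mul]
      _ = B * (1 - A ^ t) := by rw [h1]
      _ = B - B * A ^ t := by rw [Matrix.mul_sub, Matrix.mul_one]
  set u := (Matrix.diagonal θ).mulVec (x 0) with hudef
  have hx : ∀ t, x t = (A ^ t).mulVec (x 0) + (∑ s ∈ Finset.range t, A ^ s).mulVec u := by
    intro t
    induction t with
    | zero => simp
    | succ t ih =>
        calc x (t + 1) = A.mulVec (x t) + u := hrec t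
          _ = A.mulVec ((A ^ t).mulVec (x 0) + (∑ s ∈ Finset.range t, A ^ s).mulVec u) + u := by
              rw [ih]
          _ = (A ^ (t + 1)).mulVec (x 0) +
              ((A * ∑ s ∈ Finset.range t, A ^ s).mulVec u + u) := by
              rw [Matrix.mulVec_add, Matrix.mulVec_mulVec, Matrix.mulVec_mulVec, ← pow_succ',
                add_assoc]
          _ = (A ^ (t + 1)).mulVec (x 0) + (∑ s ∈ Finset.range (t + 1), A ^ s).mulVec u := by
              rw [geom_sum_succ, Matrix.add_mulVec, Matrix.one_mulVec]
  have hL : (B * Matrix.diagonal θ).mulVec (x 0) = B.mulVec u := by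
    rw [← Matrix.mulVec_mulVec, ← hudef]
  rw [hL, tendsto_pi_nhds]
  intro i
  have hxi : ∀ t, x t i = (∑ j, (A ^ t) i j * x 0 j) +
      ((B.mulVec u) i - ∑ l, B i l * ∑ j, (A ^ t) l j * u j) := by
    intro t
    rw [hx t, hS t, Matrix.sub_mulVec]
    have e1 : ((A ^ t).mulVec (x 0)) i = ∑ j, (A ^ t) i j * x 0 j := by
      simp [Matrix.mulVec, dotProduct]
    have e2 : ((B * A ^ t).mulVec u) i = ∑ l, B i l * ∑ j, (A ^ t) l j * u j := by
      rw [← Matrix.mulVec_mulVec]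
      simp [Matrix.mulVec, dotProduct, Finset.mul_sum]
    simp only [Pi.add_apply, Pi.sub_apply, e1, e2]
  simp only [hxi]
  have h1 : Filter.Tendsto (fun t => ∑ j, (A ^ t) i j * x 0 j) Filter.atTop (nhds 0) := by
    have := tendsto_finset_sum Finset.univ (fun j _ => (hAt0 i j).mul_const (x 0 j))
    simpa using this
  have h2 : Filter.Tendsto (fun t => ∑ l, B i l * ∑ j, (A ^ t) l j * u j)
      Filter.atTop (nhds 0) := by
    have := tendsto_finset_sum (Finset.univ : Finset (Fin n)) (fun l _ => by
      have hl : Filter.Tendsto (fun t => ∑ j, (A ^ t) l j * u j) Filter.atTop (nhds 0) := by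
        have := tendsto_finset_sum Finset.univ (fun j _ => (hAt0 l j).mul_const (u j))
        simpa using this
      exact hl.const_mul (B i l))
    simpa using this
  have hconst : Filter.Tendsto (fun _ : ℕ => (B.mulVec u) i) Filter.atTop
      (nhds ((B.mulVec u) i)) := tendsto_const_nhds
  have := h1.add (hconst.sub h2)
  simpa using this
end

section
/- Let the vertex set V = [n] be partitioned into stubborn agents V_s (with common stubbornness θ ∈ (0,1)) and non-stubborn agents V_r (stubbornness 0). Let A be the 0-1 adjacency matrix of an undirected graph, D its degree matrix, and M = (I-Θ)^{-1}Θ D + D - A. Assume each non-stubborn agent is connected to at least one stubborn agent, and every stubborn agent has positive degree. Then the minimum eigenvalue of the symmetric matrix M satisfies λ_min(M) ≥ θ d_min^s d_min^{rs} / (d_min^s + (1-θ) d_min^{rs}), where d_min^s is the minimum degree among stubborn agents and d_min^{rs} is the minimum number of stubborn neighbors among non-stubborn agents. -/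
/-!
Write `a` for the least degree of a stubborn agent and `b` for the least number of stubborn
neighbours of a non-stubborn agent, and `M = diag g - A`. If a positive vector `w` satisfies
`(M w)ᵢ ≥ c wᵢ` for every row, then the weighted AM-GM inequality
`2 xᵢ xⱼ ≤ xᵢ² wⱼ / wᵢ + xⱼ² wᵢ / wⱼ` on every edge gives `xᵀ M x ≥ c ‖x‖²`, so every eigenvalue
of `M` is at least `c`. The weight `(1 - θ)(a + b)` on stubborn agents and `a + (1 - θ) b` on the
others makes the non-stubborn rows exact at `c = θ a b / (a + (1 - θ) b)`, and the stubborn rows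
have the room `θ a b - c (1 - θ)(a + b) ≥ 0`.
-/

open Matrix

theorem Matrix.IsHermitian.le_eigenvalues_of_le_dotProduct_mulVec {ι : Type*} [Fintype ι]
    [DecidableEq ι] {B : Matrix ι ι ℝ} (hB : B.IsHermitian) {c : ℝ}
    (h : ∀ x : ι → ℝ, c * (x ⬝ᵥ x) ≤ x ⬝ᵥ (B *ᵥ x)) (k : ι) : c ≤ hB.eigenvalues k := by
  have hunit : ⇑(hB.eigenvectorBasis k) ⬝ᵥ ⇑(hB.eigenvectorBasis k) = 1 := by
    have := hB.eigenvectorBasis.inner_eq_one k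
    rwa [EuclideanSpace.inner_eq_star_dotProduct, star_trivial] at this
  simpa [hB.eigenvalues_eq k, hunit] using h (hB.eigenvectorBasis k)

theorem two_mul_mul_le_sq_mul_div_add_sq_mul_div {u v : ℝ} (hu : 0 < u) (hv : 0 < v) (x y : ℝ) :
    2 * (x * y) ≤ x ^ 2 * v / u + y ^ 2 * u / v := by
  rw [div_add_div _ _ hu.ne' hv.ne', le_div_iff₀ (by positivity)]
  nlinarith [sq_nonneg (x * v - y * u)]

section WeightedQuadraticForm

variable {ι : Type*} [Fintype ι] {A : Matrix ι ι ℝ} {w : ι → ℝ}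

theorem Matrix.IsSymm.dotProduct_mulVec_le_sum_div_mul_mulVec (hA : A.IsSymm)
    (hA0 : ∀ i j, 0 ≤ A i j) (hw : ∀ i, 0 < w i) (x : ι → ℝ) :
    x ⬝ᵥ (A *ᵥ x) ≤ ∑ i, x i ^ 2 / w i * (A *ᵥ w) i := by
  have hswap : ∑ i, ∑ j, A i j * (x j ^ 2 * w i / w j) =
      ∑ i, ∑ j, A i j * (x i ^ 2 * w j / w i) := by
    rw [Finset.sum_comm]
    simp_rw [← hA.apply]
  have hpair : 2 * (x ⬝ᵥ (A *ᵥ x)) ≤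
      ∑ i, ∑ j, A i j * (x i ^ 2 * w j / w i) + ∑ i, ∑ j, A i j * (x j ^ 2 * w i / w j) := by
    simp only [dotProduct, mulVec, Finset.mul_sum, ← Finset.sum_add_distrib]
    gcongr with i _ j _
    have := mul_le_mul_of_nonneg_left
      (two_mul_mul_le_sq_mul_div_add_sq_mul_div (hw i) (hw j) (x i) (x j)) (hA0 i j)
    linarith
  have hdiag : ∑ i, ∑ j, A i j * (x i ^ 2 * w j / w i) = ∑ i, x i ^ 2 / w i * (A *ᵥ w) i := by
    simp only [mulVec, dotProduct, Finset.mul_sum]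
    congr! 2 with i _ j _
    ring
  linarith

theorem le_dotProduct_diagonal_sub_mulVec [DecidableEq ι] (hA : A.IsSymm)
    (hA0 : ∀ i j, 0 ≤ A i j) (hw : ∀ i, 0 < w i) {g : ι → ℝ} {c : ℝ}
    (hc : ∀ i, c * w i ≤ g i * w i - (A *ᵥ w) i) (x : ι → ℝ) :
    c * (x ⬝ᵥ x) ≤ x ⬝ᵥ ((diagonal g - A) *ᵥ x) := by
  have hrow : ∀ i, c * x i ^ 2 ≤ x i ^ 2 / w i * (g i * w i - (A *ᵥ w) i) := by
    intro i
    calc c * x i ^ 2 = x i ^ 2 / w i * (c * w i) := by field_simp [(hw i).ne']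
      _ ≤ _ := mul_le_mul_of_nonneg_left (hc i) (div_nonneg (sq_nonneg _) (hw i).le)
  calc c * (x ⬝ᵥ x) ≤ ∑ i, x i ^ 2 / w i * (g i * w i - (A *ᵥ w) i) := by
        simpa [dotProduct, Finset.mul_sum, sq] using Finset.sum_le_sum fun i _ => hrow i
    _ = ∑ i, g i * x i ^ 2 - ∑ i, x i ^ 2 / w i * (A *ᵥ w) i := by
        rw [← Finset.sum_sub_distrib]
        congr! 1 with i
        field_simp [(hw i).ne']
    _ ≤ ∑ i, g i * x i ^ 2 - x ⬝ᵥ (A *ᵥ x) := by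
        linarith [hA.dotProduct_mulVec_le_sum_div_mul_mulVec hA0 hw x]
    _ = x ⬝ᵥ ((diagonal g - A) *ᵥ x) := by
        rw [sub_mulVec, dotProduct_sub]
        congr 1
        simp only [dotProduct, mulVec_diagonal]
        congr! 1
        ring

end WeightedQuadraticForm

section StubbornWeight

variable {ι : Type*} [DecidableEq ι] (S : Finset ι) (θ a b : ℝ)

def stubbornWeight (i : ι) : ℝ :=
  if i ∈ S then (1 - θ) * (a + b) else a + (1 - θ) * b

variable {S θ a b}

theorem stubbornWeight_pos (hθ : θ < 1) (ha : 0 ≤ a) (hb : 0 < b) (i : ι) :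
    0 < stubbornWeight S θ a b i := by
  unfold stubbornWeight
  split_ifs <;> nlinarith

theorem stubbornWeight_row_bound [Fintype ι] {A : Matrix ι ι ℝ} {d : ι → ℝ}
    (hθ : θ ∈ Set.Ioo 0 1) (ha : 0 ≤ a) (hb : 0 < b) (hA0 : ∀ i j, 0 ≤ A i j)
    (hd : ∀ i, d i = ∑ j, A i j) (haS : ∀ i ∈ S, a ≤ d i)
    (hbS : ∀ i ∉ S, b ≤ ∑ j ∈ S, A i j) (i : ι) :
    θ * a * b / (a + (1 - θ) * b) * stubbornWeight S θ a b i ≤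
      ((if i ∈ S then θ / (1 - θ) else 0) * d i + d i) * stubbornWeight S θ a b i -
        (A *ᵥ stubbornWeight S θ a b) i := by
  obtain ⟨hθ0, hθ1⟩ := hθ
  set c := θ * a * b / (a + (1 - θ) * b)
  set s := ∑ j ∈ S, A i j
  have hr : 0 < a + (1 - θ) * b := by nlinarith
  have hc0 : 0 ≤ c := by positivity
  have hcr : c * (a + (1 - θ) * b) = θ * a * b := div_mul_cancel₀ _ hr.ne'
  have hmulVec : (A *ᵥ stubbornWeight S θ a b) i =
      (1 - θ) * (a + b) * s + (a + (1 - θ) * b) * (d i - s) := by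
    rw [hd i, ← Finset.sum_add_sum_compl S, add_sub_cancel_left, Finset.mul_sum, Finset.mul_sum,
      mulVec, dotProduct, ← Finset.sum_add_sum_compl S]
    congr 1 <;> refine Finset.sum_congr rfl fun j hj => ?_
    · simp [stubbornWeight, hj, mul_comm]
    · simp [stubbornWeight, Finset.mem_compl.mp hj, mul_comm]
  by_cases hi : i ∈ S
  · have hs0 : 0 ≤ s := Finset.sum_nonneg fun j _ => hA0 i j
    have hcp : c * ((1 - θ) * (a + b)) ≤ θ * a * b := by
      rw [← hcr]
      exact mul_le_mul_of_nonneg_left (by nlinarith [mul_nonneg hθ0.le ha]) hc0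
    have hrow : (θ / (1 - θ) * d i + d i) * ((1 - θ) * (a + b)) -
        ((1 - θ) * (a + b) * s + (a + (1 - θ) * b) * (d i - s)) = θ * b * d i + θ * a * s := by
      field_simp
      ring
    simp only [stubbornWeight, hi, if_true, hmulVec, hrow]
    nlinarith [mul_le_mul_of_nonneg_left (haS i hi) (mul_nonneg hθ0.le hb.le),
      mul_nonneg (mul_nonneg hθ0.le ha) hs0]
  · simp only [stubbornWeight, hi, if_false, hmulVec]
    nlinarith [mul_le_mul_of_nonneg_left (hbS i hi) (mul_nonneg hθ0.le ha)]

end StubbornWeight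

theorem stmt_2_general (n : ℕ) (S : Finset (Fin n)) (hS : S.Nonempty) (hSc : Sᶜ.Nonempty)
    (θ : ℝ) (hθ : θ ∈ Set.Ioo (0:ℝ) 1)
    (A : Matrix (Fin n) (Fin n) ℝ) (hA01 : ∀ i j, A i j = 0 ∨ A i j = 1)
    (hAsymm : A.IsSymm)
    (d : Fin n → ℝ) (hd : ∀ i, d i = ∑ j, A i j)
    (hconn : ∀ i ∈ Sᶜ, ∃ j ∈ S, A i j = 1)
    (M : Matrix (Fin n) (Fin n) ℝ)
    (hM : M = Matrix.diagonal (fun i => if i ∈ S then θ / (1 - θ) else 0) *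
      Matrix.diagonal d + Matrix.diagonal d - A) :
    ∃ hherm : M.IsHermitian,
      ∀ k, θ * (S.inf' hS d) * (Sᶜ.inf' hSc fun i => ∑ j ∈ S, A i j) /
          (S.inf' hS d + (1 - θ) * (Sᶜ.inf' hSc fun i => ∑ j ∈ S, A i j)) ≤
        hherm.eigenvalues k := by
  have hA0 : ∀ i j, 0 ≤ A i j := fun i j => by rcases hA01 i j with h | h <;> simp [h]
  have ha : 0 ≤ S.inf' hS d :=
    S.le_inf' hS d fun i _ => hd i ▸ Finset.sum_nonneg fun j _ => hA0 i j
  have hb : 0 < Sᶜ.inf' hSc fun i => ∑ j ∈ S, A i j := by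
    refine (Finset.lt_inf'_iff hSc).mpr fun i hi => ?_
    obtain ⟨j, hj, hAij⟩ := hconn i hi
    exact (one_pos.trans_eq hAij.symm).trans_le (Finset.single_le_sum (fun k _ => hA0 i k) hj)
  rw [diagonal_mul_diagonal, diagonal_add] at hM
  subst hM
  refine ⟨(isHermitian_diagonal _).sub (isHermitian_iff_isSymm.mpr hAsymm),
    IsHermitian.le_eigenvalues_of_le_dotProduct_mulVec _ fun x => ?_⟩
  exact le_dotProduct_diagonal_sub_mulVec hAsymm hA0 (stubbornWeight_pos hθ.2 ha hb)
    (stubbornWeight_row_bound hθ ha hb hA0 hd (fun i hi => S.inf'_le d hi)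
      (fun i hi => Sᶜ.inf'_le _ (Finset.mem_compl.mpr hi))) x

/-- Lower bound on the minimum eigenvalue of
`M = (I-Θ)⁻¹Θ D + D - A` when stubborn agents (set `S`, stubbornness `θ ∈ (0,1)`)
coexist with non-stubborn agents (`Sᶜ`), each non-stubborn agent being connected to
at least one stubborn agent and every stubborn agent having positive degree. -/
theorem stmt_2 (n : ℕ) (S : Finset (Fin n)) (hS : S.Nonempty) (hSc : Sᶜ.Nonempty)
    (θ : ℝ) (hθ : θ ∈ Set.Ioo (0:ℝ) 1)
    (A : Matrix (Fin n) (Fin n) ℝ) (hA01 : ∀ i j, A i j = 0 ∨ A i j = 1)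
    (hAsymm : A.IsSymm) (hAdiag : ∀ i, A i i = 0)
    (d : Fin n → ℝ) (hd : ∀ i, d i = ∑ j, A i j)
    (hconn : ∀ i ∈ Sᶜ, ∃ j ∈ S, A i j = 1)
    (hdeg : ∀ i ∈ S, 0 < d i)
    (M : Matrix (Fin n) (Fin n) ℝ)
    (hM : M = Matrix.diagonal (fun i => if i ∈ S then θ / (1 - θ) else 0) *
      Matrix.diagonal d + Matrix.diagonal d - A) :
    ∃ hherm : M.IsHermitian,
      ∀ k, θ * (S.inf' hS d) * (Sᶜ.inf' hSc fun i => ∑ j ∈ S, A i j) /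
          (S.inf' hS d + (1 - θ) * (Sᶜ.inf' hSc fun i => ∑ j ∈ S, A i j)) ≤
        hherm.eigenvalues k :=
  stmt_2_general n S hS hSc θ hθ A hA01 hAsymm d hd hconn M hM
end

section
/- Consider the FJ model over a random graph G drawn from RG(V,Ψ), with stubbornness θ ∈ (0,1) on V_s and 0 on V_r, and M = (I-Θ)^{-1}Θ D + D - A. Assume every non-stubborn agent has positive expected stubborn degree (ψ_{ij} > 0 for some j ∈ V_s). Then with probability at least 1 - n_s e^{-δ^s/8} - n_r e^{-δ^{rs}/8}, the minimum eigenvalue of M satisfies λ_min(M) ≥ (θ δ^s δ^{rs}/2) / (δ^s + (1-θ)δ^{rs}). -/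
/-!
On the event that every stubborn agent has degree at least `δˢ/2` and every regular agent has at
least `δʳˢ/2` stubborn neighbours, the bound is deterministic. Writing `κ = θ/(1-θ)`,
`xᵀMx = κ ∑_{i∈S} dᵢxᵢ² + ½ ∑ᵢⱼ Aᵢⱼ(xᵢ-xⱼ)²`, and every edge from a regular `i` to a stubborn `j`
pays for `xᵢ²` through `θ(1-θ)xᵢ² ≤ (1-θ)(xᵢ-xⱼ)² + θxⱼ²`; balancing this against the stubborn
part gives the constant. Each of the degrees involved is a sum of independent Bernoulli edges, so
Chernoff's bound at `t = -log 2` (exponent `(1 - log 2)/2 > 1/8`) and a union bound over the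
vertices bound the probability of leaving that event.
-/

open Matrix MeasureTheory ProbabilityTheory Real Finset

lemma iIndepFun_row {Ω α : Type*} [MeasurableSpace Ω] {μ : Measure Ω} [LinearOrder α]
    {a : α → α → Ω → ℝ}
    (hind : iIndepFun (fun (p : {p : α × α // p.1 < p.2}) ω => a p.1.1 p.1.2 ω) μ)
    (hasymm : ∀ i j ω, a i j ω = a j i ω) (i : α) :
    iIndepFun (fun (j : {j // j ≠ i}) => a i j) μ := by
  have hinj : Function.Injective fun j : {j // j ≠ i} =>
      (⟨(min i j, max i j), min_lt_max.2 j.2.symm⟩ : {p : α × α // p.1 < p.2}) := by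
    rintro ⟨j, hj⟩ ⟨k, hk⟩ h
    simp only [Subtype.mk.injEq, Prod.mk.injEq] at h ⊢
    grind
  convert hind.precomp hinj using 2 with j
  funext ω
  rcases le_total i j with h | h
  · simp [h]
  · simp [h, hasymm i j ω]

lemma sum_subtype_ne_eq_sum {α β : Type*} [DecidableEq α] [AddCommMonoid β] (s : Finset α)
    {i : α} {f : α → β} (hf : f i = 0) : ∑ j ∈ s.subtype (· ≠ i), f j = ∑ j ∈ s, f j := by
  rw [sum_subtype_eq_sum_filter]
  exact sum_filter_of_ne fun j _ hj => by rintro rfl; exact hj hf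

section Probability

variable {Ω : Type*} [MeasurableSpace Ω] {μ : Measure Ω} [IsProbabilityMeasure μ]

lemma exp_mul_of_eq_zero_or_eq_one {x : ℝ} (hx : x = 0 ∨ x = 1) (t : ℝ) :
    exp (t * x) = 1 + (exp t - 1) * x := by
  rcases hx with rfl | rfl <;> simp

lemma integrable_of_eq_zero_or_eq_one {X : Ω → ℝ} (hX : Measurable X)
    (hv : ∀ ω, X ω = 0 ∨ X ω = 1) : Integrable X μ :=
  .of_bound hX.aestronglyMeasurable 1 <| .of_forall fun ω => by rcases hv ω with h | h <;> simp [h]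

lemma mgf_of_eq_zero_or_eq_one {X : Ω → ℝ} (hX : Measurable X) (hv : ∀ ω, X ω = 0 ∨ X ω = 1)
    (t : ℝ) : mgf X μ t = 1 + (exp t - 1) * μ.real {ω | X ω = 1} := by
  have hE : MeasurableSet {ω | X ω = 1} := hX (measurableSet_singleton 1)
  have hX_eq : X = {ω | X ω = 1}.indicator 1 := by
    funext ω
    rcases hv ω with h | h <;> simp [h]
  have hmean : ∫ ω, X ω ∂μ = μ.real {ω | X ω = 1} := by
    nth_rewrite 1 [hX_eq]
    exact integral_indicator_one hE
  simp only [mgf, exp_mul_of_eq_zero_or_eq_one (hv _)]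
  rw [integral_add (integrable_const 1) ((integrable_of_eq_zero_or_eq_one hX hv).const_mul _),
    integral_const_mul, hmean]
  simp

-- Chernoff's lower tail bound, with the exponential moment taken at `t = -log 2`.
theorem measureReal_sum_le_half_mean_le {ι : Type*} {X : ι → Ω → ℝ} (hindep : iIndepFun X μ)
    (hmeas : ∀ i, Measurable (X i)) (hv : ∀ i ω, X i ω = 0 ∨ X i ω = 1) (s : Finset ι) :
    μ.real {ω | ∑ i ∈ s, X i ω ≤ (∑ i ∈ s, μ.real {ω | X i ω = 1}) / 2} ≤
      exp (-((1 - log 2) / 2) * ∑ i ∈ s, μ.real {ω | X i ω = 1}) := by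
  set p : ι → ℝ := fun i => μ.real {ω | X i ω = 1}
  have hmgf : ∀ i, mgf (X i) μ (-log 2) ≤ exp (-p i / 2) := fun i => by
    rw [mgf_of_eq_zero_or_eq_one (hmeas i) (hv i), exp_neg, exp_log two_pos]
    linarith [add_one_le_exp (-p i / 2)]
  have hint : ∀ i ∈ s, Integrable (fun ω => exp (-log 2 * X i ω)) μ := fun i _ => by
    simp only [exp_mul_of_eq_zero_or_eq_one (hv i _)]
    exact (integrable_const 1).add ((integrable_of_eq_zero_or_eq_one (hmeas i) (hv i)).const_mul _)
  calc μ.real {ω | ∑ i ∈ s, X i ω ≤ (∑ i ∈ s, p i) / 2}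
      = μ.real {ω | (∑ i ∈ s, X i) ω ≤ (∑ i ∈ s, p i) / 2} := by simp only [Finset.sum_apply]
    _ ≤ exp (-(-log 2) * ((∑ i ∈ s, p i) / 2)) * mgf (∑ i ∈ s, X i) μ (-log 2) :=
        measure_le_le_exp_mul_mgf _ (neg_nonpos.2 (log_nonneg one_le_two))
          (hindep.integrable_exp_mul_sum hmeas hint)
    _ ≤ exp (-(-log 2) * ((∑ i ∈ s, p i) / 2)) * ∏ i ∈ s, exp (-p i / 2) := by
        rw [hindep.mgf_sum hmeas]
        gcongr with i
        · exact fun i _ => mgf_nonneg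
        · exact hmgf i
    _ = exp (-((1 - log 2) / 2) * ∑ i ∈ s, p i) := by
        rw [← exp_sum, ← exp_add, ← sum_div, sum_neg_distrib]
        ring_nf

lemma chernoff_exponent_lt {δ m : ℝ} (hδ : 0 < δ) (hm : δ ≤ m) :
    exp (-((1 - log 2) / 2) * m) < exp (-δ / 8) := by
  have := log_two_lt_d9
  exact exp_lt_exp.2 (by nlinarith)

lemma measureReal_rowSum_le_half_mean_le {α : Type*} [LinearOrder α] {a : α → α → Ω → ℝ}
    (hind : iIndepFun (fun (p : {p : α × α // p.1 < p.2}) ω => a p.1.1 p.1.2 ω) μ)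
    (hmeas : ∀ i j, Measurable (a i j)) (hval : ∀ i j ω, a i j ω = 0 ∨ a i j ω = 1)
    (hasymm : ∀ i j ω, a i j ω = a j i ω) (hadiag : ∀ i ω, a i i ω = 0)
    (i : α) (T : Finset α) :
    μ.real {ω | ∑ j ∈ T, a i j ω ≤ (∑ j ∈ T, μ.real {ω | a i j ω = 1}) / 2} ≤
      exp (-((1 - log 2) / 2) * ∑ j ∈ T, μ.real {ω | a i j ω = 1}) := by
  classical
  have hdeg : ∀ ω, ∑ j ∈ T.subtype (· ≠ i), a i j ω = ∑ j ∈ T, a i j ω := fun ω =>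
    sum_subtype_ne_eq_sum (f := fun j => a i j ω) T (hadiag i ω)
  have hmean : ∑ j ∈ T.subtype (· ≠ i), μ.real {ω | a i j ω = 1} =
      ∑ j ∈ T, μ.real {ω | a i j ω = 1} :=
    sum_subtype_ne_eq_sum (f := fun j => μ.real {ω | a i j ω = 1}) T (by simp [hadiag])
  simpa only [hdeg, hmean] using measureReal_sum_le_half_mean_le (iIndepFun_row hind hasymm i)
    (fun j => hmeas i j) (fun j => hval i j) (T.subtype (· ≠ i))

theorem measureReal_exists_rowSum_lt_half_lt {α : Type*} [LinearOrder α]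
    {a : α → α → Ω → ℝ}
    (hind : iIndepFun (fun (p : {p : α × α // p.1 < p.2}) ω => a p.1.1 p.1.2 ω) μ)
    (hmeas : ∀ i j, Measurable (a i j)) (hval : ∀ i j ω, a i j ω = 0 ∨ a i j ω = 1)
    (hasymm : ∀ i j ω, a i j ω = a j i ω) (hadiag : ∀ i ω, a i i ω = 0)
    {s : Finset α} (hs : s.Nonempty) (T : Finset α) {δ : ℝ} (hδ : 0 < δ)
    (hδT : ∀ i ∈ s, δ ≤ ∑ j ∈ T, μ.real {ω | a i j ω = 1}) :
    μ.real {ω | ∃ i ∈ s, ∑ j ∈ T, a i j ω < δ / 2} < s.card * exp (-δ / 8) := by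
  have hsub : {ω | ∃ i ∈ s, ∑ j ∈ T, a i j ω < δ / 2} ⊆
      ⋃ i ∈ s, {ω | ∑ j ∈ T, a i j ω ≤ (∑ j ∈ T, μ.real {ω | a i j ω = 1}) / 2} := by
    rintro ω ⟨i, hi, hlt⟩
    refine Set.mem_biUnion hi ?_
    rw [Set.mem_ofPred_eq]
    linarith [hδT i hi]
  calc _ ≤ ∑ i ∈ s, μ.real {ω | ∑ j ∈ T, a i j ω ≤ (∑ j ∈ T, μ.real {ω | a i j ω = 1}) / 2} :=
        (measureReal_mono hsub (measure_ne_top _ _)).trans (measureReal_biUnion_finset_le _ _)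
    _ < ∑ i ∈ s, exp (-δ / 8) := sum_lt_sum_of_nonempty hs fun i hi =>
        (measureReal_rowSum_le_half_mean_le hind hmeas hval hasymm hadiag i T).trans_lt
          (chernoff_exponent_lt hδ (hδT i hi))
    _ = s.card * exp (-δ / 8) := by rw [sum_const, nsmul_eq_mul]

lemma one_sub_add_le_measureReal {s t u : Set Ω} (h : ∀ ω, ω ∉ s → ω ∉ t → ω ∈ u) :
    1 - (μ.real s + μ.real t) ≤ μ.real u := by
  have hcover : Set.univ ⊆ s ∪ t ∪ u := fun ω _ => by
    by_cases hs : ω ∈ s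
    · exact Or.inl (Or.inl hs)
    by_cases ht : ω ∈ t
    · exact Or.inl (Or.inr ht)
    exact Or.inr (h ω hs ht)
  linarith [probReal_univ (μ := μ), measureReal_mono (μ := μ) hcover,
    measureReal_union_le (μ := μ) (s ∪ t) u, measureReal_union_le (μ := μ) s t]

end Probability

lemma Matrix.IsHermitian.le_eigenvalues_of_le_dotProduct {ι : Type*} [Fintype ι] [DecidableEq ι]
    {A : Matrix ι ι ℝ} (hA : A.IsHermitian) {c : ℝ}
    (h : ∀ x : ι → ℝ, c * ∑ i, x i ^ 2 ≤ x ⬝ᵥ (A *ᵥ x)) (k : ι) : c ≤ hA.eigenvalues k := by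
  set v := hA.eigenvectorBasis k
  have hv : ∑ i, v i ^ 2 = 1 := by
    have := EuclideanSpace.norm_sq_eq v
    simp_all [v, hA.eigenvectorBasis.orthonormal.1 k]
  simpa [hA.eigenvalues_eq, hv] using h v

section Laplacian

variable {ι : Type*} [Fintype ι] [DecidableEq ι]

lemma dotProduct_diagonal_mulVec (w x : ι → ℝ) :
    x ⬝ᵥ (diagonal w *ᵥ x) = ∑ i, w i * x i ^ 2 := by
  simp only [mulVec_diagonal, dotProduct]
  exact sum_congr rfl fun i _ => by ring

lemma dotProduct_laplacian_mulVec {A : Matrix ι ι ℝ} (hA : ∀ i j, A i j = A j i) (x : ι → ℝ) :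
    x ⬝ᵥ ((diagonal (fun i => ∑ j, A i j) - A) *ᵥ x) =
      (∑ i, ∑ j, A i j * (x i - x j) ^ 2) / 2 := by
  have hswap : ∑ i, ∑ j, A i j * x j ^ 2 = ∑ i, ∑ j, A i j * x i ^ 2 := by
    rw [sum_comm]
    simp only [hA]
  rw [sub_mulVec, dotProduct_sub, dotProduct_diagonal_mulVec]
  simp only [dotProduct, mulVec, mul_sum, sum_mul]
  have hexpand : ∀ i j, A i j * (x i - x j) ^ 2 =
      A i j * x i ^ 2 + A i j * x j ^ 2 - 2 * (x i * (A i j * x j)) := fun i j => by ring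
  simp only [hexpand, sum_add_distrib, sum_sub_distrib, ← mul_sum, hswap]
  ring

/-- The Friedkin–Johnsen matrix `(I - Θ)⁻¹ Θ D + D - A`, where `(I - Θ)⁻¹ Θ` is `κ` on `S` and
`0` off `S`. -/
def fjMatrix (S : Finset ι) (κ : ℝ) (A : Matrix ι ι ℝ) : Matrix ι ι ℝ :=
  diagonal (fun i => if i ∈ S then κ else 0) * diagonal (fun i => ∑ j, A i j) +
    diagonal (fun i => ∑ j, A i j) - A

lemma fjMatrix_isHermitian (S : Finset ι) (κ : ℝ) {A : Matrix ι ι ℝ}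
    (hA : ∀ i j, A i j = A j i) : (fjMatrix S κ A).IsHermitian := by
  rw [fjMatrix, diagonal_mul_diagonal]
  exact ((isHermitian_diagonal _).add (isHermitian_diagonal _)).sub
    (IsHermitian.ext fun i j => (star_trivial _).trans (hA j i))

lemma dotProduct_fjMatrix_mulVec (S : Finset ι) (κ : ℝ) {A : Matrix ι ι ℝ}
    (hA : ∀ i j, A i j = A j i) (x : ι → ℝ) :
    x ⬝ᵥ (fjMatrix S κ A *ᵥ x) =
      κ * ∑ i ∈ S, (∑ j, A i j) * x i ^ 2 + (∑ i, ∑ j, A i j * (x i - x j) ^ 2) / 2 := by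
  rw [fjMatrix, diagonal_mul_diagonal, add_sub_assoc, add_mulVec, dotProduct_add,
    dotProduct_diagonal_mulVec, dotProduct_laplacian_mulVec hA]
  simp only [ite_mul, zero_mul]
  rw [sum_ite_mem, univ_inter, mul_sum]
  simp only [mul_assoc]

end Laplacian

section QuadraticBound

variable {ι : Type*} [Fintype ι] [DecidableEq ι] {A : Matrix ι ι ℝ}

-- The difference of the two sides is `((1 - θ) * u - v) ^ 2`.
lemma mul_one_sub_mul_sq_le (θ u v : ℝ) :
    θ * (1 - θ) * u ^ 2 ≤ (1 - θ) * (u - v) ^ 2 + θ * v ^ 2 := by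
  nlinarith [sq_nonneg ((1 - θ) * u - v)]

lemma two_mul_sum_compl_sum_le (hA0 : ∀ i j, 0 ≤ A i j) (hA : ∀ i j, A i j = A j i)
    (S : Finset ι) (x : ι → ℝ) :
    2 * ∑ i ∈ Sᶜ, ∑ j ∈ S, A i j * (x i - x j) ^ 2 ≤ ∑ i, ∑ j, A i j * (x i - x j) ^ 2 := by
  have hle : ∀ (T : Finset ι) i, ∑ j ∈ T, A i j * (x i - x j) ^ 2 ≤
      ∑ j, A i j * (x i - x j) ^ 2 := fun T i =>
    sum_le_sum_of_subset_of_nonneg (subset_univ T) fun j _ _ => mul_nonneg (hA0 i j) (sq_nonneg _)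
  have hswap : ∑ i ∈ Sᶜ, ∑ j ∈ S, A i j * (x i - x j) ^ 2 =
      ∑ i ∈ S, ∑ j ∈ Sᶜ, A i j * (x i - x j) ^ 2 := by
    rw [sum_comm]
    exact sum_congr rfl fun i _ => sum_congr rfl fun j _ => by rw [hA]; ring
  rw [← sum_add_sum_compl S, two_mul]
  nth_rewrite 1 [hswap]
  exact add_le_add (sum_le_sum fun i _ => hle _ i) (sum_le_sum fun i _ => hle _ i)

lemma sum_compl_sum_mul_sq_le (hA0 : ∀ i j, 0 ≤ A i j) (hA : ∀ i j, A i j = A j i)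
    (S : Finset ι) (x : ι → ℝ) :
    ∑ i ∈ Sᶜ, ∑ j ∈ S, A i j * x j ^ 2 ≤ ∑ j ∈ S, (∑ i, A j i) * x j ^ 2 := by
  rw [sum_comm]
  refine sum_le_sum fun j _ => ?_
  simp only [sum_mul, hA _ j]
  exact sum_le_sum_of_subset_of_nonneg (subset_univ _) fun i _ _ =>
    mul_nonneg (hA0 j i) (sq_nonneg _)

lemma mul_sum_compl_sum_mul_sq_le (hA0 : ∀ i j, 0 ≤ A i j) (hA : ∀ i j, A i j = A j i)
    (S : Finset ι) (x : ι → ℝ) {θ : ℝ} (hθ0 : 0 ≤ θ) (hθ1 : θ ≤ 1) :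
    θ * (1 - θ) * ∑ i ∈ Sᶜ, (∑ j ∈ S, A i j) * x i ^ 2 ≤
      (1 - θ) * ((∑ i, ∑ j, A i j * (x i - x j) ^ 2) / 2) +
        θ * ∑ i ∈ S, (∑ j, A i j) * x i ^ 2 := by
  have h1θ : 0 ≤ 1 - θ := sub_nonneg.2 hθ1
  calc θ * (1 - θ) * ∑ i ∈ Sᶜ, (∑ j ∈ S, A i j) * x i ^ 2
      = ∑ i ∈ Sᶜ, ∑ j ∈ S, A i j * (θ * (1 - θ) * x i ^ 2) := by
        simp only [mul_sum, sum_mul]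
        exact sum_congr rfl fun i _ => sum_congr rfl fun j _ => by ring
    _ ≤ ∑ i ∈ Sᶜ, ∑ j ∈ S, A i j * ((1 - θ) * (x i - x j) ^ 2 + θ * x j ^ 2) := by
        gcongr with i _ j _
        · exact hA0 i j
        · exact mul_one_sub_mul_sq_le θ (x i) (x j)
    _ = (1 - θ) * ∑ i ∈ Sᶜ, ∑ j ∈ S, A i j * (x i - x j) ^ 2 +
          θ * ∑ i ∈ Sᶜ, ∑ j ∈ S, A i j * x j ^ 2 := by
        simp only [mul_sum, ← sum_add_distrib]
        exact sum_congr rfl fun i _ => sum_congr rfl fun j _ => by ring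
    _ ≤ _ := by
        have := two_mul_sum_compl_sum_le hA0 hA S x
        gcongr
        · linarith
        · exact sum_compl_sum_mul_sq_le hA0 hA S x

-- `Q`, `P`: squared norms of `x` on `S`, `Sᶜ`; `V = ∑_{i∈S} dᵢxᵢ²`; `L`: the Laplacian form.
lemma fj_scalar_bound {θ a b Q P V L : ℝ} (hθ0 : 0 < θ) (hθ1 : θ < 1) (ha : 0 < a) (hb : 0 < b)
    (hL : 0 ≤ L) (hQ : a * Q ≤ V) (hP : θ * (1 - θ) * b * P ≤ (1 - θ) * L + θ * V) :
    θ * a * b / (a + (1 - θ) * b) * (Q + P) ≤ θ / (1 - θ) * V + L := by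
  have h1θ : 0 < 1 - θ := sub_pos.2 hθ1
  have hκ : θ / (1 - θ) * (1 - θ) = θ := div_mul_cancel₀ _ h1θ.ne'
  have hP' : θ * b * P ≤ L + θ / (1 - θ) * V := by
    refine le_of_mul_le_mul_left ?_ h1θ
    linear_combination hP - V * hκ
  have hbL : 0 ≤ (1 - θ) * b * L := by positivity
  rw [div_mul_eq_mul_div, div_le_iff₀ (by positivity)]
  linear_combination (θ * b) * hQ + a * hP' - (b * V) * hκ + hbL

theorem mul_sum_sq_le_dotProduct_fjMatrix_mulVec (hA0 : ∀ i j, 0 ≤ A i j)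
    (hA : ∀ i j, A i j = A j i) (S : Finset ι) {θ a b : ℝ} (hθ0 : 0 < θ) (hθ1 : θ < 1)
    (ha : 0 < a) (hb : 0 < b) (hdS : ∀ i ∈ S, a ≤ ∑ j, A i j)
    (hdR : ∀ i ∉ S, b ≤ ∑ j ∈ S, A i j) (x : ι → ℝ) :
    θ * a * b / (a + (1 - θ) * b) * ∑ i, x i ^ 2 ≤ x ⬝ᵥ (fjMatrix S (θ / (1 - θ)) A *ᵥ x) := by
  have hL : 0 ≤ (∑ i, ∑ j, A i j * (x i - x j) ^ 2) / 2 :=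
    div_nonneg (sum_nonneg fun i _ => sum_nonneg fun j _ =>
      mul_nonneg (hA0 i j) (sq_nonneg _)) zero_le_two
  have hQ : a * ∑ i ∈ S, x i ^ 2 ≤ ∑ i ∈ S, (∑ j, A i j) * x i ^ 2 := by
    rw [mul_sum]
    exact sum_le_sum fun i hi => mul_le_mul_of_nonneg_right (hdS i hi) (sq_nonneg _)
  have hP : θ * (1 - θ) * b * ∑ i ∈ Sᶜ, x i ^ 2 ≤
      θ * (1 - θ) * ∑ i ∈ Sᶜ, (∑ j ∈ S, A i j) * x i ^ 2 := by
    rw [mul_assoc, mul_sum]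
    refine mul_le_mul_of_nonneg_left (sum_le_sum fun i hi => ?_) (mul_pos hθ0 (sub_pos.2 hθ1)).le
    exact mul_le_mul_of_nonneg_right (hdR i (mem_compl.1 hi)) (sq_nonneg _)
  rw [dotProduct_fjMatrix_mulVec S _ hA, ← sum_add_sum_compl S]
  exact fj_scalar_bound hθ0 hθ1 ha hb hL hQ
    (hP.trans (mul_sum_compl_sum_mul_sq_le hA0 hA S x hθ0.le hθ1.le))

theorem le_eigenvalues_fjMatrix (hA0 : ∀ i j, 0 ≤ A i j) (hA : ∀ i j, A i j = A j i)
    (S : Finset ι) {θ a b : ℝ} (hθ0 : 0 < θ) (hθ1 : θ < 1) (ha : 0 < a) (hb : 0 < b)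
    (hdS : ∀ i ∈ S, a ≤ ∑ j, A i j) (hdR : ∀ i ∉ S, b ≤ ∑ j ∈ S, A i j)
    (hH : (fjMatrix S (θ / (1 - θ)) A).IsHermitian) (k : ι) :
    θ * a * b / (a + (1 - θ) * b) ≤ hH.eigenvalues k :=
  hH.le_eigenvalues_of_le_dotProduct
    (mul_sum_sq_le_dotProduct_fjMatrix_mulVec hA0 hA S hθ0 hθ1 ha hb hdS hdR) k

end QuadraticBound

theorem stmt_8_general {Ω : Type*} [MeasurableSpace Ω] (μ : Measure Ω) [IsProbabilityMeasure μ]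
    (n : ℕ) (ψ : Fin n → Fin n → ℝ)
    (hψdiag : ∀ i, ψ i i = 0)
    (hψmem : ∀ i j, ψ i j ∈ Set.Icc (0:ℝ) 1)
    (a : Fin n → Fin n → Ω → ℝ)
    (hmeas : ∀ i j, Measurable (a i j))
    (hval : ∀ i j ω, a i j ω = 0 ∨ a i j ω = 1)
    (hasymm : ∀ i j ω, a i j ω = a j i ω) (hadiag : ∀ i ω, a i i ω = 0)
    (hprob : ∀ i j, i ≠ j → μ {ω | a i j ω = 1} = ENNReal.ofReal (ψ i j))
    (hind : iIndepFun
      (fun (p : {p : Fin n × Fin n // p.1 < p.2}) ω => a p.1.1 p.1.2 ω) μ)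
    (S : Finset (Fin n)) (hS : S.Nonempty) (hSc : Sᶜ.Nonempty)
    (θ : ℝ) (hθ : θ ∈ Set.Ioo (0:ℝ) 1)
    (hpos : ∀ i ∈ Sᶜ, ∃ j ∈ S, 0 < ψ i j)
    (δs δrs : ℝ)
    (hδs : δs = S.inf' hS fun i => ∑ j, ψ i j)
    (hδrs : δrs = Sᶜ.inf' hSc fun i => ∑ j ∈ S, ψ i j)
    (M : Ω → Matrix (Fin n) (Fin n) ℝ)
    (hM : ∀ ω, M ω =
      Matrix.diagonal (fun i => if i ∈ S then θ / (1 - θ) else 0) *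
        Matrix.diagonal (fun i => ∑ j, a i j ω) +
        Matrix.diagonal (fun i => ∑ j, a i j ω) - Matrix.of (fun i j => a i j ω)) :
    1 - ((S.card : ℝ) * Real.exp (-δs / 8) + (Sᶜ.card : ℝ) * Real.exp (-δrs / 8)) <
      (μ {ω | ∃ hherm : (M ω).IsHermitian,
        ∀ k, θ * δs * δrs / 2 / (δs + (1 - θ) * δrs) ≤ hherm.eigenvalues k}).toReal := by
  classical
  obtain ⟨hθ0, hθ1⟩ := hθ
  have hψ : ∀ i j, ψ i j = μ.real {ω | a i j ω = 1} := fun i j => by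
    rcases eq_or_ne i j with rfl | hij
    · simp [hψdiag, hadiag]
    · rw [measureReal_def, hprob i j hij, ENNReal.toReal_ofReal (hψmem i j).1]
  have hδrs0 : 0 < δrs := by
    rw [hδrs, lt_inf'_iff]
    intro i hi
    obtain ⟨j, hj, hψij⟩ := hpos i hi
    exact hψij.trans_le (single_le_sum (fun j _ => (hψmem i j).1) hj)
  rcases le_or_gt δs 0 with hδs0 | hδs0
  · have hS1 : (1 : ℝ) ≤ S.card * exp (-δs / 8) :=
      one_le_mul_of_one_le_of_one_le (by exact_mod_cast hS.card_pos) (one_le_exp (by linarith))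
    have hSc0 : 0 < (Sᶜ.card : ℝ) * exp (-δrs / 8) := by
      have := hSc.card_pos
      positivity
    exact (by linarith : _ < (0 : ℝ)).trans_le ENNReal.toReal_nonneg
  set bad₁ := {ω | ∃ i ∈ S, ∑ j, a i j ω < δs / 2}
  set bad₂ := {ω | ∃ i ∈ Sᶜ, ∑ j ∈ S, a i j ω < δrs / 2}
  have hbad₁ : μ.real bad₁ < _ :=
    measureReal_exists_rowSum_lt_half_lt hind hmeas hval hasymm hadiag hS univ hδs0
      fun i hi => by simpa only [hψ, hδs] using inf'_le _ hi
  have hbad₂ : μ.real bad₂ < _ :=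
    measureReal_exists_rowSum_lt_half_lt hind hmeas hval hasymm hadiag hSc S hδrs0
      fun i hi => by simpa only [hψ, hδrs] using inf'_le _ hi
  have hc : θ * δs * δrs / 2 / (δs + (1 - θ) * δrs) =
      θ * (δs / 2) * (δrs / 2) / (δs / 2 + (1 - θ) * (δrs / 2)) := by
    have : 0 < δs + (1 - θ) * δrs := by nlinarith
    field_simp
  refine (by linarith : _ < 1 - (μ.real bad₁ + μ.real bad₂)).trans_le
    (one_sub_add_le_measureReal fun ω hω hω' => ?_)
  simp only [bad₁, bad₂, Set.mem_ofPred_eq, not_exists, not_and, not_lt, mem_compl] at hω hω'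
  have hA : ∀ i j, (of fun i j => a i j ω) i j = (of fun i j => a i j ω) j i :=
    fun i j => hasymm i j ω
  rw [Set.mem_ofPred_eq, hM ω, hc]
  refine ⟨fjMatrix_isHermitian S _ hA, le_eigenvalues_fjMatrix (fun i j => ?_) hA S hθ0 hθ1
    (half_pos hδs0) (half_pos hδrs0) hω hω' _⟩
  rcases hval i j ω with h | h <;> simp [h]

/-- With probability at least `1 - n_s e^{-δ^s/8} - n_r e^{-δ^{rs}/8}`, the
minimum eigenvalue of the random matrix `M = (I-Θ)⁻¹Θ D + D - A` of the FJ model over the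
random graph `RG(V,Ψ)` is at least `(θ δ^s δ^{rs}/2)/(δ^s + (1-θ)δ^{rs})`, provided every
non-stubborn agent has positive expected stubborn degree. -/
theorem stmt_8 {Ω : Type*} [MeasurableSpace Ω] (μ : Measure Ω) [IsProbabilityMeasure μ]
    (n : ℕ) (ψ : Fin n → Fin n → ℝ)
    (hψsymm : ∀ i j, ψ i j = ψ j i) (hψdiag : ∀ i, ψ i i = 0)
    (hψmem : ∀ i j, ψ i j ∈ Set.Icc (0:ℝ) 1)
    (a : Fin n → Fin n → Ω → ℝ)
    (hmeas : ∀ i j, Measurable (a i j))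
    (hval : ∀ i j ω, a i j ω = 0 ∨ a i j ω = 1)
    (hasymm : ∀ i j ω, a i j ω = a j i ω) (hadiag : ∀ i ω, a i i ω = 0)
    (hprob : ∀ i j, i ≠ j → μ {ω | a i j ω = 1} = ENNReal.ofReal (ψ i j))
    (hind : iIndepFun
      (fun (p : {p : Fin n × Fin n // p.1 < p.2}) ω => a p.1.1 p.1.2 ω) μ)
    (S : Finset (Fin n)) (hS : S.Nonempty) (hSc : Sᶜ.Nonempty)
    (θ : ℝ) (hθ : θ ∈ Set.Ioo (0:ℝ) 1)
    (hpos : ∀ i ∈ Sᶜ, ∃ j ∈ S, 0 < ψ i j)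
    (δs δrs : ℝ)
    (hδs : δs = S.inf' hS fun i => ∑ j, ψ i j)
    (hδrs : δrs = Sᶜ.inf' hSc fun i => ∑ j ∈ S, ψ i j)
    (M : Ω → Matrix (Fin n) (Fin n) ℝ)
    (hM : ∀ ω, M ω =
      Matrix.diagonal (fun i => if i ∈ S then θ / (1 - θ) else 0) *
        Matrix.diagonal (fun i => ∑ j, a i j ω) +
        Matrix.diagonal (fun i => ∑ j, a i j ω) - Matrix.of (fun i j => a i j ω)) :
    1 - ((S.card : ℝ) * Real.exp (-δs / 8) + (Sᶜ.card : ℝ) * Real.exp (-δrs / 8)) <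
      (μ {ω | ∃ hherm : (M ω).IsHermitian,
        ∀ k, θ * δs * δrs / 2 / (δs + (1 - θ) * δrs) ≤ hherm.eigenvalues k}).toReal :=
  stmt_8_general μ n ψ hψdiag hψmem a hmeas hval hasymm hadiag hprob hind S hS hSc θ hθ hpos δs δrs
    hδs hδrs M hM
end

section
/- Let P = M^{-1}(I-Θ)^{-1}Θ D and P̄ = M̄^{-1}(I-Θ)^{-1}Θ D̄ with M, M̄ invertible, Θ = diag(θ I_{n_s}, 0_{n_r}) for θ ∈ (0,1), and D, D̄ diagonal. Then for any x(0) ∈ ℝ^n, ‖(P - P̄)x(0)‖ ≤ (θ/(1-θ)) · ‖M^{-1}‖ · (‖D_s - D̄_s‖ + ‖M̄^{-1}‖·‖M - M̄‖·‖D̄_s‖) · ‖x(0)‖, where D_s, D̄_s denote the diagonal blocks of D, D̄ corresponding to the stubborn agents V_s. -/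
open Matrix

set_option synthInstance.maxHeartbeats 400000
set_option maxHeartbeats 1000000

/-- Bound on the distance between the final opinion maps
`P = M⁻¹(I-Θ)⁻¹Θ D` and `P̄ = M̄⁻¹(I-Θ)⁻¹Θ D̄`, where `Θ` equals `θ` on the stubborn
set `S` and `0` elsewhere and `D, D̄` are diagonal; `Ds, D̄s` denote the diagonal parts
supported on `S`. -/
theorem stmt_11 (n : ℕ) (S : Finset (Fin n)) (θ : ℝ) (hθ : θ ∈ Set.Ioo (0:ℝ) 1)
    (M Mb : Matrix (Fin n) (Fin n) ℝ) (hM : IsUnit M) (hMb : IsUnit Mb)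
    (d db : Fin n → ℝ)
    (P Pb : Matrix (Fin n) (Fin n) ℝ)
    (hP : P = M⁻¹ * Matrix.diagonal (fun i => if i ∈ S then θ / (1 - θ) else 0) *
      Matrix.diagonal d)
    (hPb : Pb = Mb⁻¹ * Matrix.diagonal (fun i => if i ∈ S then θ / (1 - θ) else 0) *
      Matrix.diagonal db)
    (Ds Dbs : Matrix (Fin n) (Fin n) ℝ)
    (hDs : Ds = Matrix.diagonal (fun i => if i ∈ S then d i else 0))
    (hDbs : Dbs = Matrix.diagonal (fun i => if i ∈ S then db i else 0))
    (x0 : EuclideanSpace ℝ (Fin n)) :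
    ‖Matrix.toEuclideanCLM (𝕜 := ℝ) P x0 - Matrix.toEuclideanCLM (𝕜 := ℝ) Pb x0‖ ≤
      θ / (1 - θ) * ‖Matrix.toEuclideanCLM (𝕜 := ℝ) M⁻¹‖ *
        (‖Matrix.toEuclideanCLM (𝕜 := ℝ) (Ds - Dbs)‖ +
          ‖Matrix.toEuclideanCLM (𝕜 := ℝ) Mb⁻¹‖ *
            ‖Matrix.toEuclideanCLM (𝕜 := ℝ) (M - Mb)‖ *
            ‖Matrix.toEuclideanCLM (𝕜 := ℝ) Dbs‖) * ‖x0‖ := by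
  obtain ⟨hθ0, hθ1⟩ := hθ
  set c : ℝ := θ / (1 - θ) with hc
  have hc0 : 0 ≤ c := div_nonneg hθ0.le (by linarith)
  have hMd : IsUnit M.det := (Matrix.isUnit_iff_isUnit_det M).mp hM
  have hMbd : IsUnit Mb.det := (Matrix.isUnit_iff_isUnit_det Mb).mp hMb
  -- diagonal computations
  have hΘd : Matrix.diagonal (fun i => if i ∈ S then c else 0) * Matrix.diagonal d
      = c • Ds := by
    rw [hDs, Matrix.diagonal_mul_diagonal]
    ext i j
    by_cases h : i ∈ S <;> simp [Matrix.diagonal_apply, h]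
  have hΘdb : Matrix.diagonal (fun i => if i ∈ S then c else 0) * Matrix.diagonal db
      = c • Dbs := by
    rw [hDbs, Matrix.diagonal_mul_diagonal]
    ext i j
    by_cases h : i ∈ S <;> simp [Matrix.diagonal_apply, h]
  -- key matrix identity
  have hkey : P - Pb = c • (M⁻¹ * (Ds - Dbs) + Mb⁻¹ * (Mb - M) * (M⁻¹ * Dbs)) := by
    have h1 : Mb⁻¹ * (Mb - M) * (M⁻¹ * Dbs) = M⁻¹ * Dbs - Mb⁻¹ * Dbs := by
      rw [mul_sub, Matrix.nonsing_inv_mul Mb hMbd, sub_mul, one_mul,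
        mul_assoc Mb⁻¹ M, ← mul_assoc M, Matrix.mul_nonsing_inv M hMd, one_mul]
    rw [h1, hP, hPb, mul_assoc, mul_assoc, hΘd, hΘdb, mul_smul_comm, mul_smul_comm,
      mul_sub, ← smul_sub]
    congr 1
    abel
  set f := Matrix.toEuclideanCLM (𝕜 := ℝ) (n := Fin n)
  have happly : f P x0 - f Pb x0 = f (P - Pb) x0 := by
    rw [map_sub]; rfl
  rw [happly, hkey]
  have hnorm : ‖f (c • (M⁻¹ * (Ds - Dbs) + Mb⁻¹ * (Mb - M) * (M⁻¹ * Dbs)))‖ ≤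
      c * ‖f M⁻¹‖ * (‖f (Ds - Dbs)‖ + ‖f Mb⁻¹‖ * ‖f (M - Mb)‖ * ‖f Dbs‖) := by
    rw [_root_.map_smul,
      norm_smul c (f (M⁻¹ * (Ds - Dbs) + Mb⁻¹ * (Mb - M) * (M⁻¹ * Dbs))),
      Real.norm_eq_abs, abs_of_nonneg hc0]
    have h2 : ‖f (M⁻¹ * (Ds - Dbs) + Mb⁻¹ * (Mb - M) * (M⁻¹ * Dbs))‖ ≤
        ‖f M⁻¹‖ * ‖f (Ds - Dbs)‖ + ‖f Mb⁻¹‖ * ‖f (M - Mb)‖ * (‖f M⁻¹‖ * ‖f Dbs‖) := by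
      rw [map_add]
      refine (norm_add_le _ _).trans (add_le_add ?_ ?_)
      · rw [_root_.map_mul]; exact norm_mul_le _ _
      · rw [_root_.map_mul, _root_.map_mul, _root_.map_mul]
        have hMbM : ‖f (Mb - M)‖ = ‖f (M - Mb)‖ := by
          rw [← norm_neg, ← map_neg, neg_sub]
        calc ‖f Mb⁻¹ * f (Mb - M) * (f M⁻¹ * f Dbs)‖
            ≤ ‖f Mb⁻¹ * f (Mb - M)‖ * ‖f M⁻¹ * f Dbs‖ := norm_mul_le _ _
          _ ≤ ‖f Mb⁻¹‖ * ‖f (Mb - M)‖ * (‖f M⁻¹‖ * ‖f Dbs‖) :=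
              mul_le_mul (norm_mul_le _ _) (norm_mul_le _ _) (norm_nonneg _)
                (mul_nonneg (norm_nonneg _) (norm_nonneg _))
          _ = ‖f Mb⁻¹‖ * ‖f (M - Mb)‖ * (‖f M⁻¹‖ * ‖f Dbs‖) := by rw [hMbM]
    calc c * ‖f (M⁻¹ * (Ds - Dbs) + Mb⁻¹ * (Mb - M) * (M⁻¹ * Dbs))‖
        ≤ c * (‖f M⁻¹‖ * ‖f (Ds - Dbs)‖ + ‖f Mb⁻¹‖ * ‖f (M - Mb)‖ * (‖f M⁻¹‖ * ‖f Dbs‖)) :=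
          mul_le_mul_of_nonneg_left h2 hc0
      _ = c * ‖f M⁻¹‖ * (‖f (Ds - Dbs)‖ + ‖f Mb⁻¹‖ * ‖f (M - Mb)‖ * ‖f Dbs‖) := by ring
  calc ‖f (c • (M⁻¹ * (Ds - Dbs) + Mb⁻¹ * (Mb - M) * (M⁻¹ * Dbs))) x0‖
      ≤ ‖f (c • (M⁻¹ * (Ds - Dbs) + Mb⁻¹ * (Mb - M) * (M⁻¹ * Dbs)))‖ * ‖x0‖ :=
        ContinuousLinearMap.le_opNorm _ _
    _ ≤ c * ‖f M⁻¹‖ * (‖f (Ds - Dbs)‖ + ‖f Mb⁻¹‖ * ‖f (M - Mb)‖ * ‖f Dbs‖) * ‖x0‖ :=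
        mul_le_mul_of_nonneg_right hnorm (norm_nonneg _)
end

section
/- In the random graph model RG(V,Ψ) with all agents stubborn with stubbornness θ ∈ (0,1), let δ = min_i Σ_j ψ_{ij} be the minimum expected degree and M = (θ/(1-θ))D + D - A. Then P(‖M^{-1}‖ ≤ 2(1-θ)/(θδ)) > 1 - n e^{-δ/8}, where ‖·‖ is the operator 2-norm (in particular M is invertible on this event). -/
open Matrix MeasureTheory ProbabilityTheory

/-
Write `M = c D + (D - A)` with `c = θ/(1-θ)`. The Laplacian `D - A` is positive semidefinite, since
`xᵀ(D - A)x = ½ ∑ᵢⱼ aᵢⱼ (xᵢ - xⱼ)²`, so `xᵀMx ≥ c d_min ‖x‖²`. Such a coercivity bound makes `M`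
invertible, and by Cauchy–Schwarz `‖M⁻¹‖ ≤ 1/(c d_min)`. It remains to see that `d_min > δ/2`
with probability more than `1 - n e^{-δ/8}`: each degree is a sum of independent Bernoulli
variables with mean at least `δ`, and the Chernoff bound at `t = -log 2` gives
`P(dᵢ ≤ δ/2) ≤ e^{-(1 - log 2)δ/2} < e^{-δ/8}`; then take a union bound over the `n` vertices.
-/

namespace Matrix

variable {n : Type*} [Fintype n] [DecidableEq n]

open scoped RealInnerProductSpace

lemma inner_toEuclideanCLM_self_ge_of_coercive {A : Matrix n n ℝ} {m : ℝ}
    (hA : ∀ x : n → ℝ, m * (x ⬝ᵥ x) ≤ x ⬝ᵥ A *ᵥ x) (y : EuclideanSpace ℝ n) :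
    m * ‖y‖ ^ 2 ≤ ⟪y, toEuclideanCLM (𝕜 := ℝ) A y⟫ := by
  rw [inner_toEuclideanCLM, ← real_inner_self_eq_norm_sq, EuclideanSpace.inner_eq_star_dotProduct]
  simpa [dotProduct_comm] using hA y.ofLp

lemma isUnit_of_coercive {A : Matrix n n ℝ} {m : ℝ} (hm : 0 < m)
    (hA : ∀ x : n → ℝ, m * (x ⬝ᵥ x) ≤ x ⬝ᵥ A *ᵥ x) : IsUnit A := by
  refine mulVec_injective_iff_isUnit.mp fun x y hxy => ?_
  have hz := hA (x - y)
  rw [mulVec_sub, hxy, sub_self, dotProduct_zero] at hz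
  rw [← sub_eq_zero, ← dotProduct_self_eq_zero]
  exact le_antisymm (nonpos_of_mul_nonpos_right hz hm) (dotProduct_self_star_nonneg _)

lemma norm_toEuclideanCLM_inv_le_of_coercive {A : Matrix n n ℝ} {m : ℝ} (hm : 0 < m)
    (hA : ∀ x : n → ℝ, m * (x ⬝ᵥ x) ≤ x ⬝ᵥ A *ᵥ x) :
    ‖toEuclideanCLM (𝕜 := ℝ) A⁻¹‖ ≤ m⁻¹ := by
  have hAA : toEuclideanCLM (𝕜 := ℝ) A * toEuclideanCLM (𝕜 := ℝ) A⁻¹ = 1 := by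
    rw [← map_mul, mul_nonsing_inv _ ((isUnit_iff_isUnit_det A).mp (isUnit_of_coercive hm hA)),
      map_one]
  refine ContinuousLinearMap.opNorm_le_bound _ (inv_nonneg.mpr hm.le) fun x => ?_
  set y := toEuclideanCLM (𝕜 := ℝ) A⁻¹ x
  have hy : toEuclideanCLM (𝕜 := ℝ) A y = x := by
    simpa using congrArg (fun T => T x) hAA
  have key : m * ‖y‖ ^ 2 ≤ ‖y‖ * ‖x‖ :=
    (inner_toEuclideanCLM_self_ge_of_coercive hA y).trans
      (hy ▸ real_inner_le_norm y (toEuclideanCLM (𝕜 := ℝ) A y))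
  rw [inv_mul_eq_div, le_div_iff₀ hm]
  rcases (norm_nonneg y).eq_or_lt with h0 | hpos
  · rw [← h0, zero_mul]
    exact norm_nonneg x
  · nlinarith

lemma dotProduct_rowSum_laplacian_mulVec_nonneg {b : Matrix n n ℝ}
    (hsymm : ∀ i j, b i j = b j i) (hnn : ∀ i j, 0 ≤ b i j) (x : n → ℝ) :
    0 ≤ x ⬝ᵥ (diagonal (fun i => ∑ j, b i j) - b) *ᵥ x := by
  have hQ : x ⬝ᵥ (diagonal (fun i => ∑ j, b i j) - b) *ᵥ x
      = ∑ i, ∑ j, b i j * (x i ^ 2 - x i * x j) := by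
    rw [sub_mulVec, dotProduct_sub]
    simp only [dotProduct, mulVec_diagonal]
    simp only [mulVec, dotProduct, Finset.sum_mul, Finset.mul_sum, ← Finset.sum_sub_distrib]
    refine Finset.sum_congr rfl fun i _ => Finset.sum_congr rfl fun j _ => by ring
  have hswap : ∑ i, ∑ j, b i j * (x i ^ 2 - x i * x j)
      = ∑ i, ∑ j, b i j * (x j ^ 2 - x i * x j) := by
    rw [Finset.sum_comm]
    refine Finset.sum_congr rfl fun i _ => Finset.sum_congr rfl fun j _ => ?_
    rw [hsymm, mul_comm (x j)]
  have hsq : 0 ≤ ∑ i, ∑ j, b i j * (x i - x j) ^ 2 :=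
    Finset.sum_nonneg fun i _ => Finset.sum_nonneg fun j _ => mul_nonneg (hnn i j) (sq_nonneg _)
  have h2 : 2 * (x ⬝ᵥ (diagonal (fun i => ∑ j, b i j) - b) *ᵥ x)
      = ∑ i, ∑ j, b i j * (x i - x j) ^ 2 := by
    rw [two_mul, hQ]
    nth_rw 2 [hswap]
    rw [← Finset.sum_add_distrib]
    refine Finset.sum_congr rfl fun i _ => ?_
    rw [← Finset.sum_add_distrib]
    refine Finset.sum_congr rfl fun j _ => by ring
  linarith

lemma mul_dotProduct_self_le_of_rowSum_ge {b : Matrix n n ℝ}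
    (hsymm : ∀ i j, b i j = b j i) (hnn : ∀ i j, 0 ≤ b i j) {c α : ℝ} (hc : 0 ≤ c)
    (hα : ∀ i, α ≤ ∑ j, b i j) (x : n → ℝ) :
    c * α * (x ⬝ᵥ x) ≤
      x ⬝ᵥ (c • diagonal (fun i => ∑ j, b i j) + diagonal (fun i => ∑ j, b i j) - b) *ᵥ x := by
  have hdiag : α * (x ⬝ᵥ x) ≤ x ⬝ᵥ diagonal (fun i => ∑ j, b i j) *ᵥ x := by
    simp only [dotProduct, mulVec_diagonal, Finset.mul_sum]
    exact Finset.sum_le_sum fun i _ => by nlinarith [hα i, mul_self_nonneg (x i)]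
  rw [add_sub_assoc, add_mulVec, dotProduct_add, smul_mulVec, dotProduct_smul, smul_eq_mul]
  linarith [mul_le_mul_of_nonneg_left hdiag hc,
    dotProduct_rowSum_laplacian_mulVec_nonneg hsymm hnn x]

end Matrix

namespace ProbabilityTheory

variable {Ω : Type*} [MeasurableSpace Ω] {μ : Measure Ω}

lemma iIndepFun.row_of_edges {n : ℕ} {a : Fin n → Fin n → Ω → ℝ}
    (hsymm : ∀ i j ω, a i j ω = a j i ω)
    (hind : iIndepFun (fun (p : {p : Fin n × Fin n // p.1 < p.2}) ω => a p.1.1 p.1.2 ω) μ)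
    (i : Fin n) : iIndepFun (fun j : {j // j ≠ i} => a i j) μ := by
  let edge : {j // j ≠ i} → {p : Fin n × Fin n // p.1 < p.2} := fun j =>
    if h : i < j then ⟨(i, j), h⟩ else ⟨(j, i), lt_of_le_of_ne (not_lt.mp h) j.2⟩
  have hedge : ∀ j, a (edge j).1.1 (edge j).1.2 = a i j := fun j => by
    funext ω
    by_cases h : i < j <;> simp [edge, h, hsymm j i]
  have hother : ∀ j, (if (edge j).1.1 = i then (edge j).1.2 else (edge j).1.1) = j := fun j => by
    by_cases h : i < j <;> simp [edge, h, j.2]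
  have hinj : edge.Injective := fun j k hjk =>
    Subtype.ext (by rw [← hother j, ← hother k, hjk])
  simpa only [hedge] using hind.precomp hinj

variable [IsProbabilityMeasure μ]

lemma mgf_of_forall_eq_zero_or_eq_one {X : Ω → ℝ} (hX : Measurable X)
    (hval : ∀ ω, X ω = 0 ∨ X ω = 1) (t : ℝ) :
    mgf X μ t = 1 + (Real.exp t - 1) * μ.real {ω | X ω = 1} := by
  have hset : MeasurableSet {ω | X ω = 1} := hX (measurableSet_singleton 1)
  have hpt : (fun ω => Real.exp (t * X ω))
      = fun ω => 1 + (Real.exp t - 1) * {ω | X ω = 1}.indicator 1 ω := by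
    funext ω
    rcases hval ω with h | h <;> simp [h, Set.indicator]
  rw [mgf, hpt, integral_add (integrable_const 1)
    (((integrable_const 1).indicator hset).const_mul _), integral_const_mul,
    integral_indicator_one hset]
  simp

lemma iIndepFun.mgf_sum_le_of_forall_eq_zero_or_eq_one {ι : Type*} [Fintype ι]
    {X : ι → Ω → ℝ} (hind : iIndepFun X μ) (hmeas : ∀ k, Measurable (X k))
    (hval : ∀ k ω, X k ω = 0 ∨ X k ω = 1) (t : ℝ) :
    mgf (∑ k, X k) μ t ≤ Real.exp ((Real.exp t - 1) * ∑ k, μ.real {ω | X k ω = 1}) := by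
  rw [hind.mgf_sum hmeas, Finset.mul_sum, Real.exp_sum]
  refine Finset.prod_le_prod (fun k _ => mgf_nonneg) fun k _ => ?_
  rw [mgf_of_forall_eq_zero_or_eq_one (hmeas k) (hval k), add_comm]
  exact Real.add_one_le_exp _

lemma iIndepFun.measureReal_sum_le_half_lt_exp {ι : Type*} [Fintype ι]
    {X : ι → Ω → ℝ} (hind : iIndepFun X μ) (hmeas : ∀ k, Measurable (X k))
    (hval : ∀ k ω, X k ω = 0 ∨ X k ω = 1) {δ : ℝ} (hδ : 0 < δ)
    (hmean : δ ≤ ∑ k, μ.real {ω | X k ω = 1}) :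
    μ.real {ω | ∑ k, X k ω ≤ δ / 2} < Real.exp (-δ / 8) := by
  have hnn : ∀ ω, 0 ≤ ∑ k, X k ω := fun ω =>
    Finset.sum_nonneg fun k _ => by rcases hval k ω with h | h <;> simp [h]
  set t := -Real.log 2
  have ht : t ≤ 0 := neg_nonpos.mpr (Real.log_nonneg one_le_two)
  have hexp : Real.exp t = 1 / 2 := by rw [Real.exp_neg, Real.exp_log two_pos, one_div]
  have hint : Integrable (fun ω => Real.exp (t * (∑ k, X k) ω)) μ := by
    refine .of_bound (by fun_prop) 1 (ae_of_all _ fun ω => ?_)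
    rw [Finset.sum_apply, Real.norm_of_nonneg (Real.exp_nonneg _), Real.exp_le_one_iff]
    exact mul_nonpos_of_nonpos_of_nonneg ht (hnn ω)
  calc μ.real {ω | ∑ k, X k ω ≤ δ / 2}
      = μ.real {ω | (∑ k, X k) ω ≤ δ / 2} := by simp only [Finset.sum_apply]
    _ ≤ Real.exp (-t * (δ / 2)) * mgf (∑ k, X k) μ t := measure_le_le_exp_mul_mgf _ ht hint
    _ ≤ Real.exp (-t * (δ / 2)) * Real.exp ((Real.exp t - 1) * δ) := by
        gcongr
        refine (hind.mgf_sum_le_of_forall_eq_zero_or_eq_one hmeas hval t).trans ?_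
        rw [Real.exp_le_exp, hexp]
        linarith
    _ < Real.exp (-δ / 8) := by
        rw [← Real.exp_add, Real.exp_lt_exp, hexp]
        nlinarith [Real.log_two_lt_d9]

lemma measureReal_exists_rowSum_le_half_lt {n : ℕ} (hn : 0 < n) (ψ : Fin n → Fin n → ℝ)
    (hψdiag : ∀ i, ψ i i = 0) (hψnn : ∀ i j, 0 ≤ ψ i j)
    (a : Fin n → Fin n → Ω → ℝ) (hmeas : ∀ i j, Measurable (a i j))
    (hval : ∀ i j ω, a i j ω = 0 ∨ a i j ω = 1)
    (hasymm : ∀ i j ω, a i j ω = a j i ω) (hadiag : ∀ i ω, a i i ω = 0)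
    (hprob : ∀ i j, i ≠ j → μ {ω | a i j ω = 1} = ENNReal.ofReal (ψ i j))
    (hind : iIndepFun
      (fun (p : {p : Fin n × Fin n // p.1 < p.2}) ω => a p.1.1 p.1.2 ω) μ)
    {δ : ℝ} (hδ : 0 < δ) (hδψ : ∀ i, δ ≤ ∑ j, ψ i j) :
    μ.real {ω | ∃ i, ∑ j, a i j ω ≤ δ / 2} < n * Real.exp (-δ / 8) := by
  have hrow : ∀ i, μ.real {ω | ∑ j, a i j ω ≤ δ / 2} < Real.exp (-δ / 8) := by
    intro i
    have hsum : ∀ ω, ∑ j, a i j ω = ∑ j : {j // j ≠ i}, a i j ω := fun ω => by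
      rw [Fintype.sum_eq_add_sum_subtype_ne _ i, hadiag, zero_add]
    simp only [hsum]
    refine (hind.row_of_edges hasymm i).measureReal_sum_le_half_lt_exp (fun j => hmeas i j)
      (fun j => hval i j) hδ ((hδψ i).trans_eq ?_)
    rw [Fintype.sum_eq_add_sum_subtype_ne _ i, hψdiag, zero_add]
    refine Fintype.sum_congr _ _ fun j => ?_
    rw [measureReal_def, hprob i j j.2.symm, ENNReal.toReal_ofReal (hψnn i j)]
  calc μ.real {ω | ∃ i, ∑ j, a i j ω ≤ δ / 2}
      = μ.real (⋃ i, {ω | ∑ j, a i j ω ≤ δ / 2}) := by rw [Set.ofPred_exists]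
    _ ≤ ∑ i, μ.real {ω | ∑ j, a i j ω ≤ δ / 2} := measureReal_iUnion_fintype_le _
    _ < ∑ _i : Fin n, Real.exp (-δ / 8) :=
        Finset.sum_lt_sum_of_nonempty (Finset.univ_nonempty_iff.mpr ⟨⟨0, hn⟩⟩) fun i _ => hrow i
    _ = n * Real.exp (-δ / 8) := by simp

end ProbabilityTheory

theorem stmt_18_general {Ω : Type*} [MeasurableSpace Ω] (μ : Measure Ω) [IsProbabilityMeasure μ]
    (n : ℕ) (hn : 0 < n) (ψ : Fin n → Fin n → ℝ)
    (hψdiag : ∀ i, ψ i i = 0)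
    (hψmem : ∀ i j, ψ i j ∈ Set.Icc (0:ℝ) 1)
    (a : Fin n → Fin n → Ω → ℝ)
    (hmeas : ∀ i j, Measurable (a i j))
    (hval : ∀ i j ω, a i j ω = 0 ∨ a i j ω = 1)
    (hasymm : ∀ i j ω, a i j ω = a j i ω) (hadiag : ∀ i ω, a i i ω = 0)
    (hprob : ∀ i j, i ≠ j → μ {ω | a i j ω = 1} = ENNReal.ofReal (ψ i j))
    (hind : iIndepFun
      (fun (p : {p : Fin n × Fin n // p.1 < p.2}) ω => a p.1.1 p.1.2 ω) μ)
    (θ : ℝ) (hθ : θ ∈ Set.Ioo (0:ℝ) 1)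
    (δ : ℝ) (hδ : δ = Finset.univ.inf' ⟨⟨0, hn⟩, Finset.mem_univ _⟩ fun i => ∑ j, ψ i j)
    (hδpos : 0 < δ)
    (M : Ω → Matrix (Fin n) (Fin n) ℝ)
    (hM : ∀ ω, M ω = (θ / (1 - θ)) • Matrix.diagonal (fun i => ∑ j, a i j ω) +
      Matrix.diagonal (fun i => ∑ j, a i j ω) - Matrix.of (fun i j => a i j ω)) :
    1 - (n : ℝ) * Real.exp (-δ / 8) <
      (μ {ω | IsUnit (M ω) ∧
        ‖Matrix.toEuclideanCLM (𝕜 := ℝ) (M ω)⁻¹‖ ≤ 2 * (1 - θ) / (θ * δ)}).toReal := by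
  obtain ⟨hθ0, hθ1⟩ := hθ
  have hc : 0 ≤ θ / (1 - θ) := div_nonneg hθ0.le (sub_nonneg.mpr hθ1.le)
  have hm : 0 < θ / (1 - θ) * (δ / 2) := mul_pos (div_pos hθ0 (sub_pos.mpr hθ1)) (half_pos hδpos)
  have hm_inv : (θ / (1 - θ) * (δ / 2))⁻¹ = 2 * (1 - θ) / (θ * δ) := by field_simp
  set bad := {ω | ∃ i, ∑ j, a i j ω ≤ δ / 2}
  have hbad : MeasurableSet bad := by
    simp only [bad, Set.ofPred_exists]
    exact MeasurableSet.iUnion fun i =>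
      measurableSet_le (Finset.measurable_sum _ fun j _ => hmeas i j) measurable_const
  have hgood : badᶜ ⊆ {ω | IsUnit (M ω) ∧
      ‖Matrix.toEuclideanCLM (𝕜 := ℝ) (M ω)⁻¹‖ ≤ 2 * (1 - θ) / (θ * δ)} := by
    intro ω hω
    simp only [bad, Set.mem_compl_iff, Set.mem_ofPred_eq, not_exists, not_le] at hω
    have hcoer := mul_dotProduct_self_le_of_rowSum_ge (b := of fun i j => a i j ω)
      (hasymm · · ω) (fun i j => by rcases hval i j ω with h | h <;> simp [h]) hc
      (fun i => (hω i).le)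
    rw [Set.mem_ofPred_eq, hM ω, ← hm_inv]
    exact ⟨isUnit_of_coercive hm hcoer, norm_toEuclideanCLM_inv_le_of_coercive hm hcoer⟩
  have hδψ : ∀ i, δ ≤ ∑ j, ψ i j := fun i => hδ ▸ Finset.inf'_le _ (Finset.mem_univ i)
  calc 1 - (n : ℝ) * Real.exp (-δ / 8) < 1 - μ.real bad := by
        linarith [measureReal_exists_rowSum_le_half_lt hn ψ hψdiag (fun i j => (hψmem i j).1) a
          hmeas hval hasymm hadiag hprob hind hδpos hδψ]
    _ = μ.real badᶜ := (probReal_compl_eq_one_sub hbad).symm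
    _ ≤ _ := measureReal_mono hgood

/-- In the random graph model `RG(V,Ψ)` with all agents stubborn with
stubbornness `θ ∈ (0,1)` and `M = (θ/(1-θ))D + D - A`, with probability greater than
`1 - n e^{-δ/8}` the matrix `M` is invertible with `‖M⁻¹‖ ≤ 2(1-θ)/(θδ)`, where `δ` is the
minimum expected degree. -/
theorem stmt_18 {Ω : Type*} [MeasurableSpace Ω] (μ : Measure Ω) [IsProbabilityMeasure μ]
    (n : ℕ) (hn : 0 < n) (ψ : Fin n → Fin n → ℝ)
    (hψsymm : ∀ i j, ψ i j = ψ j i) (hψdiag : ∀ i, ψ i i = 0)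
    (hψmem : ∀ i j, ψ i j ∈ Set.Icc (0:ℝ) 1)
    (a : Fin n → Fin n → Ω → ℝ)
    (hmeas : ∀ i j, Measurable (a i j))
    (hval : ∀ i j ω, a i j ω = 0 ∨ a i j ω = 1)
    (hasymm : ∀ i j ω, a i j ω = a j i ω) (hadiag : ∀ i ω, a i i ω = 0)
    (hprob : ∀ i j, i ≠ j → μ {ω | a i j ω = 1} = ENNReal.ofReal (ψ i j))
    (hind : iIndepFun
      (fun (p : {p : Fin n × Fin n // p.1 < p.2}) ω => a p.1.1 p.1.2 ω) μ)
    (θ : ℝ) (hθ : θ ∈ Set.Ioo (0:ℝ) 1)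
    (δ : ℝ) (hδ : δ = Finset.univ.inf' ⟨⟨0, hn⟩, Finset.mem_univ _⟩ fun i => ∑ j, ψ i j)
    (hδpos : 0 < δ)
    (M : Ω → Matrix (Fin n) (Fin n) ℝ)
    (hM : ∀ ω, M ω = (θ / (1 - θ)) • Matrix.diagonal (fun i => ∑ j, a i j ω) +
      Matrix.diagonal (fun i => ∑ j, a i j ω) - Matrix.of (fun i j => a i j ω)) :
    1 - (n : ℝ) * Real.exp (-δ / 8) <
      (μ {ω | IsUnit (M ω) ∧
        ‖Matrix.toEuclideanCLM (𝕜 := ℝ) (M ω)⁻¹‖ ≤ 2 * (1 - θ) / (θ * δ)}).toReal :=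
  stmt_18_general μ n hn ψ hψdiag hψmem a hmeas hval hasymm hadiag hprob hind θ hθ δ hδ hδpos M hM
end
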